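/- arXiv:0712.2214 — 8 statements merged into one kernel-verified Lean document; each statement's English description precedes it below -/
import Mathlib

section
/- If p = (x, y) and q = (x', y) differ only in coordinates x_1, …, x_{i−1} (i.e., they share y = (x_i, …, x_r)), then Δ_{α_i}(p,q) = 0, where Δ_β(p,q) is the infimum over all finite chains p = p_0, p_1, …, p_m = q of the sum Σ_j D(p_{j−1}, p_j)^β. -/
/-!
Join `p` to `q` by `m` equal straight steps. Each step moves the `k`-th coordinate by
`‖q k - p k‖ / m`, so its `D`-length raised to the power `β` is at most
`∑ k (‖q k - p k‖ / m) ^ (β / α k)`, and the whole chain costs at most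
`∑ k m (‖q k - p k‖ / m) ^ (β / α k)`. A coordinate in which `p` and `q` differ has
`α k < β`, so its term decays like `m ^ (1 - β / α k) → 0`; all other terms vanish.
Hence chains of arbitrarily small cost exist.
-/

open Filter Topology

theorem Real.iSup_rpow_le_sum {ι : Type*} [Fintype ι] [Nonempty ι] {g : ι → ℝ}
    (hg : ∀ k, 0 ≤ g k) (β : ℝ) : (⨆ k, g k) ^ β ≤ ∑ k, g k ^ β := by
  obtain ⟨k₀, hk₀⟩ := Finite.exists_max g
  have hsup : ⨆ k, g k = g k₀ :=
    le_antisymm (ciSup_le hk₀) (le_ciSup (Finite.bddAbove_range g) k₀)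
  rw [hsup]
  exact Finset.single_le_sum (f := fun k => g k ^ β) (fun k _ => Real.rpow_nonneg (hg k) β)
    (Finset.mem_univ k₀)

theorem tendsto_natCast_mul_div_natCast_rpow {a γ : ℝ} (ha : 0 ≤ a) (hγ : 1 < γ) :
    Tendsto (fun m : ℕ => (m : ℝ) * (a / m) ^ γ) atTop (𝓝 0) := by
  have hpow : Tendsto (fun m : ℕ => a ^ γ * (m : ℝ) ^ (-(γ - 1))) atTop (𝓝 0) := by
    have := ((tendsto_rpow_neg_atTop (y := γ - 1) (by linarith)).comp
      tendsto_natCast_atTop_atTop).const_mul (a ^ γ)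
    rwa [mul_zero] at this
  refine hpow.congr' ((eventually_gt_atTop 0).mono fun m hm => ?_)
  have hm' : (0 : ℝ) < m := by exact_mod_cast hm
  dsimp only
  rw [Real.div_rpow ha hm'.le, neg_sub, Real.rpow_sub hm', Real.rpow_one]
  ring

section Chains

variable {X : Type*}

noncomputable def chainCost (d : X → X → ℝ) (β : ℝ) {m : ℕ} (c : Fin (m + 1) → X) : ℝ :=
  ∑ j : Fin m, d (c j.castSucc) (c j.succ) ^ β

variable [AddCommGroup X] [Module ℝ X]

noncomputable def uniformChain (p q : X) (m : ℕ) (j : Fin (m + 1)) : X :=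
  p + ((j : ℝ) / m) • (q - p)

theorem uniformChain_zero (p q : X) (m : ℕ) : uniformChain p q m 0 = p := by
  simp [uniformChain]

theorem uniformChain_last (p q : X) {m : ℕ} (hm : m ≠ 0) :
    uniformChain p q m (Fin.last m) = q := by
  simp [uniformChain, div_self (Nat.cast_ne_zero.2 hm : (m : ℝ) ≠ 0)]

theorem uniformChain_succ_sub_castSucc (p q : X) {m : ℕ} (j : Fin m) :
    uniformChain p q m j.succ - uniformChain p q m j.castSucc = (m : ℝ)⁻¹ • (q - p) := by
  simp only [uniformChain, Fin.val_succ, Fin.val_castSucc, add_sub_add_left_eq_sub, ← sub_smul]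
  push_cast
  ring_nf

end Chains

section AnisotropicGauge

variable {ι : Type*} {E : ι → Type*} [∀ k, NormedAddCommGroup (E k)]

noncomputable def anisoDist (α : ι → ℝ) (x y : ∀ k, E k) : ℝ :=
  ⨆ k, ‖x k - y k‖ ^ (1 / α k)

theorem anisoDist_nonneg (α : ι → ℝ) (x y : ∀ k, E k) : 0 ≤ anisoDist α x y :=
  Real.iSup_nonneg fun _ => Real.rpow_nonneg (norm_nonneg _) _

theorem chainCost_anisoDist_nonneg (α : ι → ℝ) (β : ℝ) {m : ℕ} (c : Fin (m + 1) → ∀ k, E k) :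
    0 ≤ chainCost (anisoDist α) β c :=
  Finset.sum_nonneg fun _ _ => Real.rpow_nonneg (anisoDist_nonneg α _ _) β

variable [Fintype ι]

theorem anisoDist_rpow_le_sum [Nonempty ι] (α : ι → ℝ) (β : ℝ) (x y : ∀ k, E k) :
    anisoDist α x y ^ β ≤ ∑ k, ‖x k - y k‖ ^ (β / α k) := by
  refine (Real.iSup_rpow_le_sum (fun k => Real.rpow_nonneg (norm_nonneg _) _) β).trans_eq ?_
  simp only [← Real.rpow_mul (norm_nonneg _), one_div_mul_eq_div]

variable [∀ k, NormedSpace ℝ (E k)]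

theorem chainCost_uniformChain_le [Nonempty ι] (α : ι → ℝ) (β : ℝ) (p q : ∀ k, E k) (m : ℕ) :
    chainCost (anisoDist α) β (uniformChain p q m) ≤
      ∑ k, (m : ℝ) * (‖q k - p k‖ / m) ^ (β / α k) := by
  have hstep (j : Fin m) (k : ι) :
      ‖uniformChain p q m j.castSucc k - uniformChain p q m j.succ k‖ = ‖q k - p k‖ / m := by
    rw [norm_sub_rev, ← Pi.sub_apply, uniformChain_succ_sub_castSucc, Pi.smul_apply, norm_smul,
      norm_inv, RCLike.norm_natCast, inv_mul_eq_div, Pi.sub_apply]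
  calc chainCost (anisoDist α) β (uniformChain p q m)
      ≤ ∑ _j : Fin m, ∑ k, (‖q k - p k‖ / m) ^ (β / α k) :=
        Finset.sum_le_sum fun j _ => (anisoDist_rpow_le_sum α β _ _).trans_eq (by simp only [hstep])
    _ = ∑ k, (m : ℝ) * (‖q k - p k‖ / m) ^ (β / α k) := by
        rw [Finset.sum_const, Finset.card_univ, Fintype.card_fin, nsmul_eq_mul, Finset.mul_sum]

theorem tendsto_chainCost_uniformChain [Nonempty ι] {α : ι → ℝ} {β : ℝ} (hα : ∀ k, 0 < α k)
    (hβ : 0 < β) {p q : ∀ k, E k} (hpq : ∀ k, β ≤ α k → p k = q k) :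
    Tendsto (fun m => chainCost (anisoDist α) β (uniformChain p q m)) atTop (𝓝 0) := by
  have hbound : Tendsto (fun m : ℕ => ∑ k, (m : ℝ) * (‖q k - p k‖ / m) ^ (β / α k))
      atTop (𝓝 0) := by
    rw [← Finset.sum_const_zero (s := (Finset.univ : Finset ι))]
    refine tendsto_finsetSum _ fun k _ => ?_
    by_cases hk : β ≤ α k
    · simp [hpq k hk, Real.zero_rpow (div_pos hβ (hα k)).ne']
    · exact tendsto_natCast_mul_div_natCast_rpow (norm_nonneg _)
        ((one_lt_div (hα k)).2 (not_le.1 hk))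
  exact tendsto_of_tendsto_of_tendsto_of_le_of_le tendsto_const_nhds hbound
    (fun m => chainCost_anisoDist_nonneg α β _) (chainCost_uniformChain_le α β p q)

end AnisotropicGauge

/-- If `p` and `q` agree in all coordinates `x_i, …, x_r`, then `Δ_{α_i}(p,q) = 0`,
where `Δ_β(p,q)` is the infimum over finite chains from `p` to `q` of `Σ D(p_{j-1},p_j)^β`. -/
theorem stmt_2 (r : ℕ) (n : Fin (r + 1) → ℕ) (α : Fin (r + 1) → ℝ)
    (hα : ∀ i, 0 < α i) (hmono : StrictMono α)
    (D : (∀ i, EuclideanSpace ℝ (Fin (n i))) → (∀ i, EuclideanSpace ℝ (Fin (n i))) → ℝ)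
    (hD : ∀ x y, D x y = ⨆ i, ‖x i - y i‖ ^ (1 / α i))
    (Δ : ℝ → (∀ i, EuclideanSpace ℝ (Fin (n i))) → (∀ i, EuclideanSpace ℝ (Fin (n i))) → ℝ)
    (hΔ : ∀ β p q, Δ β p q = sInf {s : ℝ |
        ∃ (m : ℕ) (c : Fin (m + 1) → (∀ i, EuclideanSpace ℝ (Fin (n i)))),
          c 0 = p ∧ c (Fin.last m) = q ∧
          s = ∑ j : Fin m, D (c j.castSucc) (c j.succ) ^ β})
    (i : Fin (r + 1)) (p q : ∀ i, EuclideanSpace ℝ (Fin (n i)))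
    (hshare : ∀ j, i ≤ j → p j = q j) :
    Δ (α i) p q = 0 := by
  obtain rfl : D = anisoDist α := funext fun x => funext (hD x)
  have hlim := tendsto_chainCost_uniformChain hα (hα i) fun k hk => hshare k (hmono.le_iff_le.1 hk)
  have hchains : ∀ᶠ m in atTop, chainCost (anisoDist α) (α i) (uniformChain p q m) ∈ {s : ℝ |
      ∃ (m : ℕ) (c : Fin (m + 1) → (∀ i, EuclideanSpace ℝ (Fin (n i)))),
        c 0 = p ∧ c (Fin.last m) = q ∧
        s = ∑ j : Fin m, anisoDist α (c j.castSucc) (c j.succ) ^ α i} :=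
    (eventually_ne_atTop 0).mono fun m hm =>
      ⟨m, uniformChain p q m, uniformChain_zero p q m, uniformChain_last p q hm, rfl⟩
  rw [hΔ]
  refine (isGLB_of_mem_closure ?_ (mem_closure_of_tendsto hlim hchains)).csInf_eq
    ⟨_, hchains.exists.choose_spec⟩
  rintro s ⟨m, c, -, -, rfl⟩
  exact chainCost_anisoDist_nonneg α (α i) c
end

section
/- If p = (x,y) and q = (x',y') with y ≠ y' (where y = (x_i,…,x_r) are the last coordinates), then Δ_{α_i}(p,q) > 0. Combined with the previous direction: Δ_{α_i}(p,q) = 0 if and only if p and q agree in all coordinates x_i, …, x_r. -/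
/-!
For `j ≥ i` the exponent `θ = α_i / α_j` is at most `1`, so `t ↦ t ^ θ` is subadditive. Along any
chain from `p` to `q`, the triangle inequality in the coordinate `x_j` then gives
`‖p_j - q_j‖ ^ θ ≤ ∑ ‖Δx_j‖ ^ θ ≤ ∑ D ^ α_i`, a positive lower bound for `Δ_{α_i}(p, q)`.
Conversely, if `p` and `q` agree in `x_i, …, x_r`, cut the segment from `p` to `q` into `N` equal
steps: the coordinate `x_j` contributes at most `N (d_j / N) ^ (α_i / α_j)`, which tends to `0`
because `α_j < α_i` whenever `d_j ≠ 0`.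
-/

open Filter Topology

theorem rpow_sum_le_sum_rpow {ι : Type*} (s : Finset ι) {f : ι → ℝ} (hf : ∀ i ∈ s, 0 ≤ f i)
    {θ : ℝ} (hθ₀ : 0 < θ) (hθ₁ : θ ≤ 1) : (∑ i ∈ s, f i) ^ θ ≤ ∑ i ∈ s, f i ^ θ := by
  induction s using Finset.cons_induction with
  | empty => simp [Real.zero_rpow hθ₀.ne']
  | cons a s ha ih =>
    simp only [Finset.forall_mem_cons] at hf
    rw [Finset.sum_cons, Finset.sum_cons]
    calc (f a + ∑ i ∈ s, f i) ^ θ ≤ f a ^ θ + (∑ i ∈ s, f i) ^ θ :=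
          Real.rpow_add_le_add_rpow hf.1 (Finset.sum_nonneg hf.2) hθ₀.le hθ₁
      _ ≤ f a ^ θ + ∑ i ∈ s, f i ^ θ := by gcongr; exact ih hf.2

theorem dist_le_sum_dist_fin {X : Type*} [PseudoMetricSpace X] {m : ℕ} (c : Fin (m + 1) → X) :
    dist (c 0) (c (Fin.last m)) ≤ ∑ k : Fin m, dist (c k.castSucc) (c k.succ) := by
  induction m with
  | zero => simp
  | succ m ih =>
    rw [Fin.sum_univ_castSucc]
    calc dist (c 0) (c (Fin.last (m + 1)))
        ≤ dist (c 0) (c (Fin.last m).castSucc) +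
            dist (c (Fin.last m).castSucc) (c (Fin.last m).succ) :=
          dist_triangle _ _ _
      _ ≤ _ := by
          gcongr
          simpa only [Fin.castSucc_zero, Fin.succ_castSucc] using ih fun k => c k.castSucc

theorem tendsto_natCast_mul_div_rpow_nhds_zero {a γ : ℝ} (ha : 0 ≤ a) (hγ : 0 < γ)
    (h : a ≠ 0 → 1 < γ) :
    Tendsto (fun N : ℕ => N * (a / N) ^ γ) atTop (𝓝 0) := by
  rcases eq_or_ne a 0 with rfl | ha₀
  · simp [Real.zero_rpow hγ.ne']
  have hlim : Tendsto (fun N : ℕ => a ^ γ * (N : ℝ) ^ (-(γ - 1))) atTop (𝓝 0) := by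
    have := ((tendsto_rpow_neg_atTop (by linarith [h ha₀] : 0 < γ - 1)).comp
      tendsto_natCast_atTop_atTop).const_mul (a ^ γ)
    rwa [mul_zero] at this
  refine hlim.congr' ((eventually_gt_atTop 0).mono fun N hN => ?_)
  have hN' : (0 : ℝ) < N := Nat.cast_pos.2 hN
  dsimp only
  rw [Real.div_rpow ha hN'.le, neg_sub, Real.rpow_sub hN', Real.rpow_one]
  field_simp

noncomputable def quasiDist {ι : Type*} {E : ι → Type*} [∀ i, SeminormedAddCommGroup (E i)]
    (α : ι → ℝ) (x y : ∀ i, E i) : ℝ :=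
  ⨆ i, ‖x i - y i‖ ^ (1 / α i)

theorem quasiDist_nonneg {ι : Type*} {E : ι → Type*} [∀ i, SeminormedAddCommGroup (E i)]
    (α : ι → ℝ) (x y : ∀ i, E i) : 0 ≤ quasiDist α x y :=
  Real.iSup_nonneg fun _ => Real.rpow_nonneg (norm_nonneg _) _

/-- `Δ_β(p, q)` is `sInf (chainCosts D β p q)`. -/
def chainCosts {X : Type*} (d : X → X → ℝ) (β : ℝ) (p q : X) : Set ℝ :=
  {s | ∃ (m : ℕ) (c : Fin (m + 1) → X), c 0 = p ∧ c (Fin.last m) = q ∧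
    s = ∑ k : Fin m, d (c k.castSucc) (c k.succ) ^ β}

section chainCosts

variable {X : Type*} {d : X → X → ℝ} {β : ℝ} {p q : X}

theorem chainCosts_nonempty : (chainCosts d β p q).Nonempty :=
  ⟨d p q ^ β, 1, ![p, q], rfl, rfl, by simp⟩

theorem nonneg_of_mem_chainCosts (hd : ∀ x y, 0 ≤ d x y) {s : ℝ}
    (hs : s ∈ chainCosts d β p q) : 0 ≤ s := by
  obtain ⟨m, c, -, -, rfl⟩ := hs
  exact Finset.sum_nonneg fun k _ => Real.rpow_nonneg (hd _ _) _

end chainCosts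

section quasiDist

variable {ι : Type*} [Fintype ι] {E : ι → Type*} [∀ i, SeminormedAddCommGroup (E i)]
  {α : ι → ℝ} {β : ℝ}

theorem norm_sub_rpow_le_quasiDist_rpow (hβ : 0 ≤ β) (x y : ∀ i, E i) (j : ι) :
    ‖x j - y j‖ ^ (β / α j) ≤ quasiDist α x y ^ β := by
  rw [div_eq_inv_mul, ← one_div, Real.rpow_mul (norm_nonneg _)]
  exact Real.rpow_le_rpow (Real.rpow_nonneg (norm_nonneg _) _)
    (le_ciSup (f := fun i => ‖x i - y i‖ ^ (1 / α i)) (Set.finite_range _).bddAbove j) hβ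

theorem quasiDist_rpow_le_sum (hβ : 0 < β) (x y : ∀ i, E i) :
    quasiDist α x y ^ β ≤ ∑ j, ‖x j - y j‖ ^ (β / α j) := by
  set S := ∑ j, ‖x j - y j‖ ^ (β / α j)
  have hS : 0 ≤ S := Finset.sum_nonneg fun j _ => Real.rpow_nonneg (norm_nonneg _) _
  have hle : quasiDist α x y ≤ S ^ (1 / β) := by
    refine Real.iSup_le (fun j => ?_) (Real.rpow_nonneg hS _)
    have hj : ‖x j - y j‖ ^ (1 / α j) = (‖x j - y j‖ ^ (β / α j)) ^ (1 / β) := by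
      rw [← Real.rpow_mul (norm_nonneg _)]
      congr 1
      field_simp
    rw [hj]
    exact Real.rpow_le_rpow (Real.rpow_nonneg (norm_nonneg _) _)
      (Finset.single_le_sum (f := fun j => ‖x j - y j‖ ^ (β / α j))
        (fun j _ => Real.rpow_nonneg (norm_nonneg _) _) (Finset.mem_univ j))
      (by positivity)
  calc quasiDist α x y ^ β ≤ (S ^ (1 / β)) ^ β :=
        Real.rpow_le_rpow (quasiDist_nonneg α x y) hle hβ.le
    _ = S := by rw [← Real.rpow_mul hS, one_div_mul_cancel hβ.ne', Real.rpow_one]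

theorem rpow_norm_sub_le_sInf_chainCosts (hβ : 0 < β) {j : ι} (hβα : β ≤ α j)
    (p q : ∀ i, E i) :
    ‖p j - q j‖ ^ (β / α j) ≤ sInf (chainCosts (quasiDist α) β p q) := by
  have hαj : 0 < α j := hβ.trans_le hβα
  refine le_csInf chainCosts_nonempty ?_
  rintro _ ⟨m, c, rfl, rfl, rfl⟩
  calc ‖c 0 j - c (Fin.last m) j‖ ^ (β / α j)
      ≤ (∑ k : Fin m, ‖c k.castSucc j - c k.succ j‖) ^ (β / α j) := by
        gcongr
        simpa only [dist_eq_norm] using dist_le_sum_dist_fin fun k => c k j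
    _ ≤ ∑ k : Fin m, ‖c k.castSucc j - c k.succ j‖ ^ (β / α j) :=
        rpow_sum_le_sum_rpow _ (fun k _ => norm_nonneg _) (div_pos hβ hαj)
          ((div_le_one hαj).2 hβα)
    _ ≤ ∑ k : Fin m, quasiDist α (c k.castSucc) (c k.succ) ^ β :=
        Finset.sum_le_sum fun k _ => norm_sub_rpow_le_quasiDist_rpow hβ.le _ _ j

end quasiDist

section segment

variable {ι : Type*} [Fintype ι] {E : ι → Type*} [∀ i, NormedAddCommGroup (E i)]
  [∀ i, NormedSpace ℝ (E i)] {α : ι → ℝ} {β : ℝ}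

theorem sInf_chainCosts_quasiDist_le (hβ : 0 < β) (p q : ∀ i, E i) {N : ℕ} (hN : 0 < N) :
    sInf (chainCosts (quasiDist α) β p q) ≤ ∑ j, N * (‖p j - q j‖ / N) ^ (β / α j) := by
  have hN' : (0 : ℝ) < N := Nat.cast_pos.2 hN
  let c : Fin (N + 1) → ∀ i, E i := fun k => p + ((k : ℝ) / N) • (q - p)
  have hstep (k : Fin N) (j : ι) : ‖c k.castSucc j - c k.succ j‖ = ‖p j - q j‖ / N := by
    have : c k.castSucc j - c k.succ j = (N : ℝ)⁻¹ • (p j - q j) := by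
      simp only [c, Pi.add_apply, Pi.smul_apply, Pi.sub_apply, Fin.val_castSucc, Fin.val_succ]
      rw [add_sub_add_left_eq_sub, ← sub_smul, ← neg_sub (p j), smul_neg, ← neg_smul]
      congr 1
      push_cast
      field_simp
      ring
    rw [this, norm_smul, Real.norm_of_nonneg (inv_nonneg.2 hN'.le), inv_mul_eq_div]
  have hmem : ∑ k : Fin N, quasiDist α (c k.castSucc) (c k.succ) ^ β ∈
      chainCosts (quasiDist α) β p q := by
    refine ⟨N, c, by simp [c], ?_, rfl⟩
    simp only [c, Fin.val_last, div_self hN'.ne', one_smul, add_sub_cancel]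
  calc sInf (chainCosts (quasiDist α) β p q)
      ≤ ∑ k : Fin N, quasiDist α (c k.castSucc) (c k.succ) ^ β :=
        csInf_le ⟨0, fun _ => nonneg_of_mem_chainCosts (quasiDist_nonneg α)⟩ hmem
    _ ≤ ∑ _k : Fin N, ∑ j, (‖p j - q j‖ / N) ^ (β / α j) :=
        Finset.sum_le_sum fun k _ => by
          simpa only [hstep] using quasiDist_rpow_le_sum hβ (c k.castSucc) (c k.succ)
    _ = ∑ j, N * (‖p j - q j‖ / N) ^ (β / α j) := by
        rw [Finset.sum_const, Finset.card_univ, Fintype.card_fin, nsmul_eq_mul, Finset.mul_sum]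

theorem sInf_chainCosts_quasiDist_eq_zero (hβ : 0 < β) (hα : ∀ j, 0 < α j) {p q : ∀ i, E i}
    (hpq : ∀ j, β ≤ α j → p j = q j) : sInf (chainCosts (quasiDist α) β p q) = 0 := by
  have hlim : Tendsto (fun N : ℕ => ∑ j, N * (‖p j - q j‖ / N) ^ (β / α j)) atTop (𝓝 0) := by
    rw [← Finset.sum_const_zero]
    refine tendsto_finsetSum _ fun j _ =>
      tendsto_natCast_mul_div_rpow_nhds_zero (norm_nonneg _) (div_pos hβ (hα j)) fun hj => ?_
    exact (one_lt_div (hα j)).2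
      (lt_of_not_ge fun hβj => hj (by rw [hpq j hβj, sub_self, norm_zero]))
  refine le_antisymm (ge_of_tendsto hlim ?_) (Real.sInf_nonneg fun _ =>
    nonneg_of_mem_chainCosts (quasiDist_nonneg α))
  filter_upwards [eventually_gt_atTop 0] with N hN using sInf_chainCosts_quasiDist_le hβ p q hN

end segment

/-- If `p` and `q` differ in some coordinate `x_j` with `j ≥ i`, then `Δ_{α_i}(p,q) > 0`;
combined with the other direction: `Δ_{α_i}(p,q) = 0` iff `p,q` agree in coordinates
`x_i, …, x_r`. -/
theorem stmt_3 (r : ℕ) (n : Fin (r + 1) → ℕ) (α : Fin (r + 1) → ℝ)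
    (hα : ∀ i, 0 < α i) (hmono : StrictMono α)
    (D : (∀ i, EuclideanSpace ℝ (Fin (n i))) → (∀ i, EuclideanSpace ℝ (Fin (n i))) → ℝ)
    (hD : ∀ x y, D x y = ⨆ i, ‖x i - y i‖ ^ (1 / α i))
    (Δ : ℝ → (∀ i, EuclideanSpace ℝ (Fin (n i))) → (∀ i, EuclideanSpace ℝ (Fin (n i))) → ℝ)
    (hΔ : ∀ β p q, Δ β p q = sInf {s : ℝ |
        ∃ (m : ℕ) (c : Fin (m + 1) → (∀ i, EuclideanSpace ℝ (Fin (n i)))),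
          c 0 = p ∧ c (Fin.last m) = q ∧
          s = ∑ j : Fin m, D (c j.castSucc) (c j.succ) ^ β})
    (i : Fin (r + 1)) (p q : ∀ i, EuclideanSpace ℝ (Fin (n i))) :
    ((∃ j, i ≤ j ∧ p j ≠ q j) → 0 < Δ (α i) p q) ∧
    (Δ (α i) p q = 0 ↔ ∀ j, i ≤ j → p j = q j) := by
  obtain rfl : D = quasiDist α := funext fun x => funext fun y => hD x y
  have hΔi : Δ (α i) p q = sInf (chainCosts (quasiDist α) (α i) p q) := hΔ _ _ _
  have hpos : (∃ j, i ≤ j ∧ p j ≠ q j) → 0 < Δ (α i) p q := by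
    rintro ⟨j, hij, hpq⟩
    rw [hΔi]
    exact (Real.rpow_pos_of_pos (norm_pos_iff.2 (sub_ne_zero.2 hpq)) _).trans_le
      (rpow_norm_sub_le_sInf_chainCosts (hα i) (hmono.monotone hij) p q)
  refine ⟨hpos, fun hzero j hij => by_contra fun hpq => (hpos ⟨j, hij, hpq⟩).ne' hzero,
    fun hagree => ?_⟩
  rw [hΔi]
  exact sInf_chainCosts_quasiDist_eq_zero (hα i) hα fun j hij =>
    hagree j (hmono.le_iff_le.1 hij)
end

section
/- If F(x_1,…,x_r) = (f_1(x_1,…,x_r), …, f_r(x_r)) is a K-bilipschitz map of (ℝ^n, D), then for l > i the component f_i is Hölder continuous in the variable x_l with exponent α_i/α_l: |f_i(x_i, …, x_l, …, x_r) − f_i(x_i, …, x_l', …, x_r)| ≤ K^{α_i} |x_l − x_l'|^{α_i/α_l}. -/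
/-!
Only the `l`-th coordinates of `x` and `x'` differ, so `D x x' = ‖x l - x' l‖ ^ (1 / α l)`.
The `i`-th term of the supremum defining `D (F x) (F x')` is at most `K * D x x'`, and raising
this to the power `α i` gives the Hölder bound.
-/

section AnisotropicSupremum

variable {ι : Type*} [Finite ι] {E : ι → Type*} [∀ i, SeminormedAddCommGroup (E i)]

lemma norm_sub_rpow_le_iSup (α : ι → ℝ) (x y : ∀ i, E i) (i : ι) :
    ‖x i - y i‖ ^ (1 / α i) ≤ ⨆ j, ‖x j - y j‖ ^ (1 / α j) :=
  le_ciSup (f := fun j => ‖x j - y j‖ ^ (1 / α j)) (Set.finite_range _).bddAbove i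

lemma iSup_norm_sub_rpow_of_eq_of_ne {α : ι → ℝ} (hα : ∀ i, 0 < α i) {x y : ∀ i, E i}
    {l : ι} (h : ∀ j, j ≠ l → x j = y j) :
    ⨆ j, ‖x j - y j‖ ^ (1 / α j) = ‖x l - y l‖ ^ (1 / α l) := by
  have : Nonempty ι := ⟨l⟩
  refine le_antisymm (ciSup_le fun j => ?_) (norm_sub_rpow_le_iSup α x y l)
  rcases eq_or_ne j l with rfl | hj
  · exact le_rfl
  · rw [h j hj, sub_self, norm_zero, Real.zero_rpow (one_div_pos.2 (hα j)).ne']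
    positivity

end AnisotropicSupremum

theorem stmt_7_general (r : ℕ) (n : Fin (r + 1) → ℕ) (α : Fin (r + 1) → ℝ)
    (hα : ∀ i, 0 < α i)
    (D : (∀ i, EuclideanSpace ℝ (Fin (n i))) → (∀ i, EuclideanSpace ℝ (Fin (n i))) → ℝ)
    (hD : ∀ x y, D x y = ⨆ i, ‖x i - y i‖ ^ (1 / α i))
    (F : (∀ i, EuclideanSpace ℝ (Fin (n i))) → ∀ i, EuclideanSpace ℝ (Fin (n i)))
    (K : ℝ) (hK : 1 ≤ K)
    (hbilip : ∀ p q, D p q / K ≤ D (F p) (F q) ∧ D (F p) (F q) ≤ K * D p q) :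
    ∀ (i l : Fin (r + 1)), i < l →
      ∀ (x x' : ∀ i, EuclideanSpace ℝ (Fin (n i))),
        (∀ j, j ≠ l → x j = x' j) →
        ‖F x i - F x' i‖ ≤ K ^ α i * ‖x l - x' l‖ ^ (α i / α l) := by
  intro i l _ x x' hx
  have hK₀ : 0 ≤ K := zero_le_one.trans hK
  have hcomp : ‖F x i - F x' i‖ ^ (α i)⁻¹ ≤ K * ‖x l - x' l‖ ^ (1 / α l) :=
    calc ‖F x i - F x' i‖ ^ (α i)⁻¹ ≤ D (F x) (F x') := by
          rw [hD, ← one_div]; exact norm_sub_rpow_le_iSup α (F x) (F x') i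
      _ ≤ K * D x x' := (hbilip x x').2
      _ = K * ‖x l - x' l‖ ^ (1 / α l) := by rw [hD, iSup_norm_sub_rpow_of_eq_of_ne hα hx]
  calc ‖F x i - F x' i‖ ≤ (K * ‖x l - x' l‖ ^ (1 / α l)) ^ α i :=
        (Real.rpow_inv_le_iff_of_pos (norm_nonneg _) (by positivity) (hα i)).1 hcomp
    _ = K ^ α i * ‖x l - x' l‖ ^ (α i / α l) := by
        rw [Real.mul_rpow hK₀ (by positivity), ← Real.rpow_mul (norm_nonneg _), one_div_mul_eq_div]

/-- For `l > i`, the component `f_i` of a `K`-bilipschitz map of `(ℝ^n, D)` is Hölder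
continuous in the variable `x_l` with exponent `α_i/α_l`. -/
theorem stmt_7 (r : ℕ) (n : Fin (r + 1) → ℕ) (α : Fin (r + 1) → ℝ)
    (hα : ∀ i, 0 < α i) (hmono : StrictMono α)
    (D : (∀ i, EuclideanSpace ℝ (Fin (n i))) → (∀ i, EuclideanSpace ℝ (Fin (n i))) → ℝ)
    (hD : ∀ x y, D x y = ⨆ i, ‖x i - y i‖ ^ (1 / α i))
    (F : (∀ i, EuclideanSpace ℝ (Fin (n i))) → ∀ i, EuclideanSpace ℝ (Fin (n i)))
    (hFbij : Function.Bijective F) (K : ℝ) (hK : 1 ≤ K)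
    (hbilip : ∀ p q, D p q / K ≤ D (F p) (F q) ∧ D (F p) (F q) ≤ K * D p q) :
    ∀ (i l : Fin (r + 1)), i < l →
      ∀ (x x' : ∀ i, EuclideanSpace ℝ (Fin (n i))),
        (∀ j, j ≠ l → x j = x' j) →
        ‖F x i - F x' i‖ ≤ K ^ α i * ‖x l - x' l‖ ^ (α i / α l) :=
  stmt_7_general r n α hα D hD F K hK hbilip
end

section
/- Every similarity of (ℝ^n, D) with similarity factor t is the composition of the standard dilation δ_t with a map of the form (x_1, …, x_r) ↦ (A_1(x_1 + B_1), …, A_r(x_r + B_r)), where A_i ∈ O(n_i) and B_i ∈ ℝ^{n_i}. -/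
/-!
Rescaling by `δ_{1/t}` turns `F` into a bijective isometry `H` of `D`. Whether `p` and `q` agree in
every coordinate with `α j > a` can be read off from `D` alone: it holds iff for every `m` they can
be joined by `m` steps of size `D p q / m ^ (1 / a)`, since along such chains a coordinate with
`α j > a` moves by at most `D ^ α j * m ^ (1 - α j / a) → 0`. So `H` and `H⁻¹` preserve agreement
in the coordinates above any level; as the `α j` are distinct, this forces every coordinate map
`u ↦ H (update x i u) i` to be an isometry of `ℝ^{n_i}`, hence affine. For `‖u - v‖` large the
coordinate maps at two base points `x`, `x'` satisfy `dist (φ u) (φ' v) ≤ dist u v`, and in a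
strictly convex space this pins `φ'` to the affine isometry `φ`.
-/

open Function Filter Topology

theorem exists_pos_forall_lt_iff_le {ι : Type*} [Finite ι] {α : ι → ℝ} (hα : ∀ i, 0 < α i)
    (i : ι) : ∃ a, 0 < a ∧ ∀ j, a < α j ↔ α i ≤ α j := by
  have : Fintype ι := Fintype.ofFinite ι
  let s : Finset ℝ := insert (α i / 2) ((Finset.univ.filter fun j => α j < α i).image α)
  have hs : ∀ b ∈ s, b < α i := by
    simp only [s, Finset.mem_insert, Finset.mem_image, Finset.mem_filter]
    rintro b (rfl | ⟨j, ⟨-, hj⟩, rfl⟩)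
    exacts [half_lt_self (hα i), hj]
  refine ⟨s.max' (Finset.insert_nonempty _ _), ?_, fun j => ⟨fun h => ?_, fun h => ?_⟩⟩
  · exact (half_pos (hα i)).trans_le (s.le_max' _ (Finset.mem_insert_self _ _))
  · by_contra! hj
    exact h.not_ge (s.le_max' _ (Finset.mem_insert_of_mem (by simpa using ⟨j, hj, rfl⟩)))
  · exact ((s.max'_lt_iff _).2 hs).trans_le h

theorem AffineIsometry.apply_eq_of_forall_le_dist {E F : Type*} [NormedAddCommGroup E]
    [NormedSpace ℝ E] [Nontrivial E] [NormedAddCommGroup F] [NormedSpace ℝ F]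
    [StrictConvexSpace ℝ F] (f : E →ᵃⁱ[ℝ] F) {g : E → F} {c : ℝ}
    (h : ∀ u v, c ≤ dist u v → dist (f u) (g v) ≤ dist u v) (v : E) : g v = f v := by
  obtain ⟨e, he⟩ := exists_norm_eq E (le_max_right c 0)
  have hc : c ≤ ‖e‖ := he ▸ le_max_left c 0
  have h₁ : dist (f (v + e)) (g v) ≤ ‖e‖ := by
    simpa using h (v + e) v (by simpa using hc)
  have h₂ : dist (f (v - e)) (g v) ≤ ‖e‖ := by
    simpa using h (v - e) v (by simpa using hc)
  have h₃ : dist (f (v + e)) (f (v - e)) = 2 * ‖e‖ := by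
    rw [f.dist_map, dist_eq_norm, add_sub_sub_cancel, ← two_smul ℝ, norm_smul, Real.norm_two]
  have h₄ := dist_triangle_right (f (v + e)) (f (v - e)) (g v)
  calc g v = midpoint ℝ (f (v + e)) (f (v - e)) :=
        eq_midpoint_of_dist_eq_half (by linarith) (by rw [dist_comm]; linarith)
    _ = f (midpoint ℝ (v + e) (v - e)) := (f.toAffineMap.map_midpoint _ _).symm
    _ = f v := by
        congr 1
        rw [midpoint_eq_smul_add, add_add_sub_cancel, ← two_smul ℝ v, smul_smul]
        norm_num

theorem AffineIsometry.exists_linearIsometryEquiv {E : Type*} [NormedAddCommGroup E]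
    [NormedSpace ℝ E] [FiniteDimensional ℝ E] (f : E →ᵃⁱ[ℝ] E) :
    ∃ A : E ≃ₗᵢ[ℝ] E, ∀ u, f u = A u + f 0 :=
  ⟨f.linearIsometry.toLinearIsometryEquiv rfl, fun u => by simpa using f.map_vadd 0 u⟩

def HasFineChains {X : Type*} (d : X → X → ℝ) (a : ℝ) (p q : X) : Prop :=
  ∀ m : ℕ, 0 < m → ∃ c : ℕ → X, c 0 = p ∧ c m = q ∧
    ∀ k < m, d (c k) (c (k + 1)) ≤ d p q / (m : ℝ) ^ (1 / a)

theorem HasFineChains.map {X Y : Type*} {d : X → X → ℝ} {d' : Y → Y → ℝ} {f : X → Y}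
    (hf : ∀ p q, d' (f p) (f q) = d p q) {a : ℝ} {p q : X} (h : HasFineChains d a p q) :
    HasFineChains d' a (f p) (f q) := by
  intro m hm
  obtain ⟨c, hc₀, hcm, hc⟩ := h m hm
  exact ⟨f ∘ c, by simp [hc₀], by simp [hcm],
    fun k hk => by simpa only [comp_apply, hf] using hc k hk⟩

namespace GradedDist

variable {ι : Type*} {E : ι → Type*} [∀ i, NormedAddCommGroup (E i)]

noncomputable def gradedDist (α : ι → ℝ) (x y : ∀ i, E i) : ℝ := ⨆ i, ‖x i - y i‖ ^ (1 / α i)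

noncomputable def dilation [∀ i, NormedSpace ℝ (E i)] (α : ι → ℝ) (s : ℝ) (x : ∀ i, E i) :
    ∀ i, E i :=
  fun i => s ^ α i • x i

variable {α : ι → ℝ}

lemma gradedDist_nonneg (x y : ∀ i, E i) : 0 ≤ gradedDist α x y :=
  Real.iSup_nonneg fun _ => Real.rpow_nonneg (norm_nonneg _) _

lemma gradedDist_self (hα : ∀ i, α i ≠ 0) (x : ∀ i, E i) : gradedDist α x x = 0 :=
  le_antisymm (Real.iSup_le (fun i => by simp [hα i]) le_rfl) (gradedDist_nonneg x x)

lemma rpow_le_gradedDist [Finite ι] (x y : ∀ i, E i) (i : ι) :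
    ‖x i - y i‖ ^ (1 / α i) ≤ gradedDist α x y :=
  le_ciSup (f := fun i => ‖x i - y i‖ ^ (1 / α i)) (Set.finite_range _).bddAbove i

lemma norm_sub_le_gradedDist_rpow [Finite ι] {i : ι} (hα : 0 < α i) (x y : ∀ i, E i) :
    ‖x i - y i‖ ≤ gradedDist α x y ^ α i :=
  calc ‖x i - y i‖ = (‖x i - y i‖ ^ (1 / α i)) ^ α i := by
        rw [one_div, Real.rpow_inv_rpow (norm_nonneg _) hα.ne']
    _ ≤ gradedDist α x y ^ α i := by
        gcongr
        exact rpow_le_gradedDist x y i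

lemma gradedDist_update_le [Finite ι] [DecidableEq ι] (x y : ∀ i, E i) (i : ι) (u v : E i) :
    gradedDist α (update x i u) (update y i v) ≤ max (‖u - v‖ ^ (1 / α i)) (gradedDist α x y) := by
  refine Real.iSup_le (fun j => ?_) (le_max_of_le_right (gradedDist_nonneg x y))
  rcases eq_or_ne j i with rfl | hji
  · simp
  · simpa [update_of_ne hji] using le_max_of_le_right (rpow_le_gradedDist x y j)

lemma gradedDist_dilation [∀ i, NormedSpace ℝ (E i)] (hα : ∀ i, α i ≠ 0) {s : ℝ} (hs : 0 ≤ s)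
    (x y : ∀ i, E i) :
    gradedDist α (dilation α s x) (dilation α s y) = s * gradedDist α x y := by
  simp only [gradedDist, Real.mul_iSup_of_nonneg hs]
  congr 1 with i
  rw [dilation, dilation, ← smul_sub, norm_smul, Real.norm_of_nonneg (by positivity),
    Real.mul_rpow (by positivity) (norm_nonneg _), one_div, Real.rpow_rpow_inv hs (hα i)]

lemma dilation_dilation [∀ i, NormedSpace ℝ (E i)] (α : ι → ℝ) {s s' : ℝ} (hs : 0 ≤ s)
    (hs' : 0 ≤ s') (x : ∀ i, E i) : dilation α s (dilation α s' x) = dilation α (s * s') x := by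
  ext1 i
  simp only [dilation, smul_smul, Real.mul_rpow hs hs']

lemma dilation_one [∀ i, NormedSpace ℝ (E i)] (α : ι → ℝ) (x : ∀ i, E i) :
    dilation α 1 x = x := by
  ext1 i
  simp [dilation]

lemma dilation_bijective [∀ i, NormedSpace ℝ (E i)] (α : ι → ℝ) {s : ℝ} (hs : 0 < s) :
    Bijective (dilation α s : (∀ i, E i) → ∀ i, E i) := by
  refine bijective_iff_has_inverse.2 ⟨dilation α s⁻¹, fun x => ?_, fun x => ?_⟩ <;>
    simp only [dilation_dilation α (inv_nonneg.2 hs.le) hs.le, dilation_dilation α hs.le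
      (inv_nonneg.2 hs.le), inv_mul_cancel₀ hs.ne', mul_inv_cancel₀ hs.ne', dilation_one]

lemma hasFineChains_of_forall_lt_imp_eq [Finite ι] [∀ i, NormedSpace ℝ (E i)]
    (hα : ∀ i, 0 < α i) {a : ℝ} {p q : ∀ i, E i} (h : ∀ i, a < α i → p i = q i) :
    HasFineChains (gradedDist α) a p q := by
  intro m hm
  have hm' : (1 : ℝ) ≤ m := Nat.one_le_cast.2 hm
  refine ⟨fun k => p + ((k : ℝ) / m) • (q - p), by simp,
    by simp [(zero_lt_one.trans_le hm').ne'], fun k _ => ?_⟩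
  have hD : 0 ≤ gradedDist α p q / (m : ℝ) ^ (1 / a) :=
    div_nonneg (gradedDist_nonneg p q) (by positivity)
  refine Real.iSup_le (fun i => ?_) hD
  have hstep : ‖(p + ((k : ℝ) / m) • (q - p)) i - (p + (((k + 1 : ℕ) : ℝ) / m) • (q - p)) i‖
      = ‖p i - q i‖ / m := by
    have hcoef : (k / m - (k + 1 : ℕ) / m : ℝ) = -(1 / m) := by
      push_cast
      field_simp
      ring
    simp only [Pi.add_apply, Pi.smul_apply, Pi.sub_apply, add_sub_add_left_eq_sub, ← sub_smul,
      hcoef, norm_smul, norm_neg, norm_div, norm_one, RCLike.norm_natCast, norm_sub_rev (q i)]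
    ring
  rw [hstep, Real.div_rpow (norm_nonneg _) (by positivity)]
  rcases le_or_gt (α i) a with hai | hai
  · exact div_le_div₀ (gradedDist_nonneg p q) (rpow_le_gradedDist p q i) (by positivity)
      (Real.rpow_le_rpow_of_exponent_le hm' (one_div_le_one_div_of_le (hα i) hai))
  · simpa [h i hai, (hα i).ne'] using hD

lemma eq_of_hasFineChains [Finite ι] {a : ℝ} (ha : 0 < a) {i : ι} (hi : a < α i)
    {p q : ∀ i, E i} (h : HasFineChains (gradedDist α) a p q) : p i = q i := by
  set D := gradedDist α p q
  have hα : 0 < α i := ha.trans hi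
  have hbound : ∀ m : ℕ, 0 < m → dist (p i) (q i) ≤ D ^ α i * (m : ℝ) ^ (-(α i / a - 1)) := by
    intro m hm
    obtain ⟨c, hc₀, hcm, hc⟩ := h m hm
    have hm' : (0 : ℝ) < m := Nat.cast_pos.2 hm
    calc dist (p i) (q i) ≤ ∑ k ∈ Finset.range m, dist (c k i) (c (k + 1) i) := by
          simpa [hc₀, hcm] using dist_le_range_sum_dist (fun k => c k i) m
      _ ≤ ∑ k ∈ Finset.range m, (D / (m : ℝ) ^ (1 / a)) ^ α i := by
          refine Finset.sum_le_sum fun k hk => ?_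
          rw [dist_eq_norm]
          exact (norm_sub_le_gradedDist_rpow hα _ _).trans
            (by gcongr; exacts [gradedDist_nonneg _ _, hc k (Finset.mem_range.1 hk)])
      _ = D ^ α i * (m : ℝ) ^ (-(α i / a - 1)) := by
          rw [Finset.sum_const, Finset.card_range, nsmul_eq_mul,
            Real.div_rpow (gradedDist_nonneg _ _) (by positivity), ← Real.rpow_mul hm'.le,
            Real.rpow_neg hm'.le, Real.rpow_sub hm', Real.rpow_one]
          field_simp
          rfl
  have hlim : Tendsto (fun m : ℕ => D ^ α i * (m : ℝ) ^ (-(α i / a - 1))) atTop (𝓝 0) := by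
    have := (tendsto_rpow_neg_atTop (y := α i / a - 1)
      (by rw [sub_pos, one_lt_div ha]; exact hi)).comp tendsto_natCast_atTop_atTop
    simpa using this.const_mul (D ^ α i)
  exact dist_le_zero.1 (ge_of_tendsto hlim (eventually_atTop.2 ⟨1, hbound⟩))

variable [Finite ι] {H : (∀ i, E i) → ∀ i, E i}

lemma norm_apply_update_sub_le [DecidableEq ι]
    (hH : ∀ p q, gradedDist α (H p) (H q) = gradedDist α p q) {i : ι} (hα : 0 < α i)
    {x y : ∀ i, E i} {u v : E i} (h : gradedDist α x y ^ α i ≤ ‖u - v‖) :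
    ‖H (update x i u) i - H (update y i v) i‖ ≤ ‖u - v‖ := by
  have hxy : gradedDist α x y ≤ ‖u - v‖ ^ (1 / α i) := by
    rwa [one_div, Real.le_rpow_inv_iff_of_pos (gradedDist_nonneg x y) (norm_nonneg _) hα]
  calc ‖H (update x i u) i - H (update y i v) i‖
      ≤ gradedDist α (H (update x i u)) (H (update y i v)) ^ α i :=
        norm_sub_le_gradedDist_rpow hα _ _
    _ = gradedDist α (update x i u) (update y i v) ^ α i := by rw [hH]
    _ ≤ (‖u - v‖ ^ (1 / α i)) ^ α i := by
        gcongr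
        · exact gradedDist_nonneg _ _
        · exact (gradedDist_update_le x y i u v).trans (max_le le_rfl hxy)
    _ = ‖u - v‖ := by rw [one_div, Real.rpow_inv_rpow (norm_nonneg _) hα.ne']

variable [∀ i, NormedSpace ℝ (E i)]

lemma apply_eq_of_forall_lt_imp_eq (hα : ∀ i, 0 < α i)
    (hH : ∀ p q, gradedDist α (H p) (H q) = gradedDist α p q) {a : ℝ} (ha : 0 < a)
    {p q : ∀ i, E i} (h : ∀ i, a < α i → p i = q i) (i : ι) (hi : a < α i) : H p i = H q i :=
  eq_of_hasFineChains ha hi ((hasFineChains_of_forall_lt_imp_eq hα h).map hH)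

lemma apply_eq_of_forall_le_imp_eq (hα : ∀ i, 0 < α i)
    (hH : ∀ p q, gradedDist α (H p) (H q) = gradedDist α p q) {i : ι} {p q : ∀ i, E i}
    (h : ∀ j, α i ≤ α j → p j = q j) : H p i = H q i := by
  obtain ⟨a, ha, hlt⟩ := exists_pos_forall_lt_iff_le hα i
  exact apply_eq_of_forall_lt_imp_eq hα hH ha (fun j hj => h j ((hlt j).1 hj)) i
    ((hlt i).2 le_rfl)

theorem isometry_apply_update [DecidableEq ι] (hα : ∀ i, 0 < α i) (hinj : Injective α)
    (H : (∀ i, E i) ≃ ∀ i, E i) (hH : ∀ p q, gradedDist α (H p) (H q) = gradedDist α p q)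
    (x : ∀ i, E i) (i : ι) : Isometry fun u : E i => H (update x i u) i := by
  have hα₀ : ∀ i, α i ≠ 0 := fun i => (hα i).ne'
  have hG : ∀ p q, gradedDist α (H.symm p) (H.symm q) = gradedDist α p q := fun p q => by
    rw [← hH, H.apply_symm_apply, H.apply_symm_apply]
  have hself : ∀ y : ∀ i, E i, ∀ u v : E i, gradedDist α y y ^ α i ≤ ‖u - v‖ := fun y u v => by
    rw [gradedDist_self hα₀, Real.zero_rpow (hα₀ i)]
    exact norm_nonneg _
  refine Isometry.of_dist_eq fun u v => le_antisymm ?_ ?_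
  · simpa only [dist_eq_norm] using norm_apply_update_sub_le hH (hα i) (hself x u v)
  set y := H (update x i u)
  set w := H (update x i v) i
  have hu : H.symm (update y i (y i)) i = u := by simp [y]
  -- The images of `update x i u` and `update x i v` can differ only in coordinates `j` with
  -- `α j ≤ α i`, so `update y i w` agrees with `H (update x i v)` wherever `α i ≤ α j`.
  have hv : H.symm (update y i w) i = v := by
    have hagree : ∀ j, α i ≤ α j → update y i w j = H (update x i v) j := by
      intro j hj
      rcases eq_or_ne j i with rfl | hji
      · simp [w]
      rw [update_of_ne hji]
      refine apply_eq_of_forall_lt_imp_eq hα hH (hα i) (fun k hk => ?_) j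
        (hj.lt_of_ne (hinj.ne hji.symm))
      rw [update_of_ne (ne_of_apply_ne α hk.ne'), update_of_ne (ne_of_apply_ne α hk.ne')]
    simpa using apply_eq_of_forall_le_imp_eq hα hG hagree
  calc dist u v = ‖H.symm (update y i (y i)) i - H.symm (update y i w) i‖ := by
        rw [hu, hv, dist_eq_norm]
    _ ≤ ‖y i - w‖ := norm_apply_update_sub_le hG (hα i) (hself y _ _)
    _ = dist (H (update x i u) i) (H (update x i v) i) := (dist_eq_norm _ _).symm

theorem exists_linearIsometryEquiv_of_gradedDist_eq [∀ i, StrictConvexSpace ℝ (E i)]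
    [∀ i, FiniteDimensional ℝ (E i)] (hα : ∀ i, 0 < α i) (hinj : Injective α)
    (H : (∀ i, E i) ≃ ∀ i, E i) (hH : ∀ p q, gradedDist α (H p) (H q) = gradedDist α p q) :
    ∃ (A : ∀ i, E i ≃ₗᵢ[ℝ] E i) (b : ∀ i, E i), ∀ x i, H x i = A i (x i) + b i := by
  classical
  let f i := (isometry_apply_update hα hinj H hH 0 i).affineIsometryOfStrictConvexSpace
  choose A hA using fun i => (f i).exists_linearIsometryEquiv
  refine ⟨A, fun i => f i 0, fun x i => ?_⟩
  rw [← hA]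
  rcases subsingleton_or_nontrivial (E i) with _ | _
  · exact Subsingleton.elim _ _
  have hfar : ∀ u v, gradedDist α 0 x ^ α i ≤ dist u v →
      dist (f i u) (H (update x i v) i) ≤ dist u v := fun u v huv => by
    rw [dist_eq_norm, dist_eq_norm]
    exact norm_apply_update_sub_le hH (hα i) (huv.trans_eq (dist_eq_norm u v))
  simpa using (f i).apply_eq_of_forall_le_dist hfar (x i)

end GradedDist

open GradedDist

/-- Every similarity of `(ℝ^n, D)` with factor `t` is the standard dilation `δ_t` composed
with `(x_1,…,x_r) ↦ (A_1(x_1+B_1), …, A_r(x_r+B_r))` with `A_i ∈ O(n_i)`, `B_i ∈ ℝ^{n_i}`. -/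
theorem stmt_8 (r : ℕ) (n : Fin (r + 1) → ℕ) (α : Fin (r + 1) → ℝ)
    (hα : ∀ i, 0 < α i) (hmono : StrictMono α)
    (D : (∀ i, EuclideanSpace ℝ (Fin (n i))) → (∀ i, EuclideanSpace ℝ (Fin (n i))) → ℝ)
    (hD : ∀ x y, D x y = ⨆ i, ‖x i - y i‖ ^ (1 / α i))
    (F : (∀ i, EuclideanSpace ℝ (Fin (n i))) → ∀ i, EuclideanSpace ℝ (Fin (n i)))
    (hFbij : Function.Bijective F) (t : ℝ) (ht : 0 < t)
    (hsim : ∀ p q, D (F p) (F q) = t * D p q) :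
    ∃ (A : ∀ i, EuclideanSpace ℝ (Fin (n i)) ≃ₗᵢ[ℝ] EuclideanSpace ℝ (Fin (n i)))
      (B : ∀ i, EuclideanSpace ℝ (Fin (n i))),
      ∀ x i, F x i = t ^ α i • (A i) (x i + B i) := by
  have hDeq : D = gradedDist α := funext₂ hD
  subst hDeq
  have hα₀ : ∀ i, α i ≠ 0 := fun i => (hα i).ne'
  let H := Equiv.ofBijective _ ((dilation_bijective α (inv_pos.2 ht)).comp hFbij)
  have hH : ∀ p q, gradedDist α (H p) (H q) = gradedDist α p q := fun p q => by
    simp only [H, Equiv.ofBijective_apply, comp_apply, gradedDist_dilation hα₀ (inv_pos.2 ht).le,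
      hsim, inv_mul_cancel_left₀ ht.ne']
  obtain ⟨A, b, hAb⟩ := exists_linearIsometryEquiv_of_gradedDist_eq hα hmono.injective H hH
  refine ⟨A, fun i => (A i).symm (b i), fun x i => ?_⟩
  have hF : F x = dilation α t (H x) := by
    simp [H, dilation_dilation α ht.le (inv_pos.2 ht).le, mul_inv_cancel₀ ht.ne', dilation_one]
  rw [hF, dilation, hAb, map_add, LinearIsometryEquiv.apply_symm_apply]
end

section
/- Suppose G(x,y) = (t^{α_1} A_y(x + B_y), g(y)) is a K-quasisimilarity of (ℝ^{n_1} × ℝ^{n'}, D), where A_y ∈ O(n_1) and B_y ∈ ℝ^{n_1} may depend on y ∈ ℝ^{n'}. Then A_y = A_{y'} for all y, y'; i.e., the rotational part is independent of y. -/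
/-! Fix `y, y'`. Points `(x, y)` and `(x, y')` are at `D`-distance `max 0 (D' y y')` whatever `x`
is, so the upper quasisimilarity bound keeps `A_y (x + B_y) - A_{y'} (x + B_{y'})` bounded as
`x` ranges over `ℝ^{n_1}`. This is an affine map of `x` with linear part `A_y - A_{y'}`, and a
bounded affine map on a vector space is constant. -/

theorem eq_zero_of_forall_norm_smul_add_le {E : Type*} [NormedAddCommGroup E] [NormedSpace ℝ E]
    {u c : E} {C : ℝ} (h : ∀ s : ℝ, ‖s • u + c‖ ≤ C) : u = 0 := by
  by_contra hu
  have hu_pos : 0 < ‖u‖ := norm_pos_iff.mpr hu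
  have hC : ‖c‖ ≤ C := by simpa using h 0
  set s := (C + ‖c‖ + 1) / ‖u‖
  have hs : ‖s • u‖ = C + ‖c‖ + 1 := by
    rw [norm_smul_of_nonneg (div_nonneg (by linarith [norm_nonneg c]) hu_pos.le),
      div_mul_cancel₀ _ hu_pos.ne']
  have htriangle := norm_sub_norm_le (s • u) (-c)
  rw [sub_neg_eq_add, norm_neg, hs] at htriangle
  linarith [h s]

theorem LinearMap.eq_of_forall_norm_map_add_sub_map_add_le {E F : Type*}
    [NormedAddCommGroup E] [NormedSpace ℝ E] [NormedAddCommGroup F] [NormedSpace ℝ F]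
    (A A' : E →ₗ[ℝ] F) (b b' : E) {C : ℝ} (h : ∀ x, ‖A (x + b) - A' (x + b')‖ ≤ C) :
    A = A' := by
  ext v
  rw [← sub_eq_zero]
  refine eq_zero_of_forall_norm_smul_add_le (c := A b - A' b') (C := C) fun s => ?_
  convert h (s • v) using 2
  simp only [map_add, map_smul, smul_sub]
  abel

theorem Real.le_rpow_of_max_rpow_one_div_le {a b C α : ℝ} (ha : 0 ≤ a) (hα : 0 < α)
    (h : max (a ^ (1 / α)) b ≤ C) : a ≤ C ^ α := by
  have ha' : a ^ (1 / α) ≤ C := le_of_max_le_left h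
  rw [one_div] at ha'
  exact (Real.rpow_inv_le_iff_of_pos ha ((by positivity : 0 ≤ a ^ α⁻¹).trans ha') hα).mp ha'

theorem stmt_9_general (n1 n' : ℕ) (α1 : ℝ) (hα1 : 0 < α1)
    (D' : EuclideanSpace ℝ (Fin n') → EuclideanSpace ℝ (Fin n') → ℝ)
    (D : EuclideanSpace ℝ (Fin n1) × EuclideanSpace ℝ (Fin n') →
         EuclideanSpace ℝ (Fin n1) × EuclideanSpace ℝ (Fin n') → ℝ)
    (hD : ∀ p q, D p q = max (‖p.1 - q.1‖ ^ (1 / α1)) (D' p.2 q.2))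
    (t K : ℝ) (ht : 0 < t)
    (A : EuclideanSpace ℝ (Fin n') →
         (EuclideanSpace ℝ (Fin n1) ≃ₗᵢ[ℝ] EuclideanSpace ℝ (Fin n1)))
    (B : EuclideanSpace ℝ (Fin n') → EuclideanSpace ℝ (Fin n1))
    (g : EuclideanSpace ℝ (Fin n') → EuclideanSpace ℝ (Fin n'))
    (G : EuclideanSpace ℝ (Fin n1) × EuclideanSpace ℝ (Fin n') →
         EuclideanSpace ℝ (Fin n1) × EuclideanSpace ℝ (Fin n'))
    (hG : ∀ p, G p = (t ^ α1 • (A p.2) (p.1 + B p.2), g p.2))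
    (hQS : ∀ p q, t / K * D p q ≤ D (G p) (G q) ∧ D (G p) (G q) ≤ t * K * D p q) :
    ∀ y y', A y = A y' := by
  intro y y'
  have hdist : ∀ x, D (x, y) (x, y') = max 0 (D' y y') := fun x => by
    simp [hD, Real.zero_rpow (inv_ne_zero hα1.ne')]
  have hbound : ∀ x, t ^ α1 * ‖A y (x + B y) - A y' (x + B y')‖ ≤
      (t * K * max 0 (D' y y')) ^ α1 := fun x => by
    have hupper := (hQS (x, y) (x, y')).2
    rw [hdist, hD, hG, hG, ← smul_sub, norm_smul_of_nonneg (by positivity)] at hupper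
    exact Real.le_rpow_of_max_rpow_one_div_le (by positivity) hα1 hupper
  have hlinear := LinearMap.eq_of_forall_norm_map_add_sub_map_add_le
    (A y).toLinearMap (A y').toLinearMap (B y) (B y')
    fun x => (le_div_iff₀' (by positivity)).mpr (hbound x)
  exact LinearIsometryEquiv.ext (LinearMap.congr_fun hlinear)

/-- For a `(t,K)`-quasisimilarity `G(x,y) = (t^{α_1} A_y(x + B_y), g(y))` of
`ℝ^{n_1} × ℝ^{n'}` with the quasi-metric `D`, the rotational part `A_y` is independent
of `y`. -/
theorem stmt_9 (n1 n' : ℕ) (α1 : ℝ) (hα1 : 0 < α1)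
    (D' : EuclideanSpace ℝ (Fin n') → EuclideanSpace ℝ (Fin n') → ℝ)
    (D : EuclideanSpace ℝ (Fin n1) × EuclideanSpace ℝ (Fin n') →
         EuclideanSpace ℝ (Fin n1) × EuclideanSpace ℝ (Fin n') → ℝ)
    (hD : ∀ p q, D p q = max (‖p.1 - q.1‖ ^ (1 / α1)) (D' p.2 q.2))
    (t K : ℝ) (ht : 0 < t) (hK : 1 ≤ K)
    (A : EuclideanSpace ℝ (Fin n') →
         (EuclideanSpace ℝ (Fin n1) ≃ₗᵢ[ℝ] EuclideanSpace ℝ (Fin n1)))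
    (B : EuclideanSpace ℝ (Fin n') → EuclideanSpace ℝ (Fin n1))
    (g : EuclideanSpace ℝ (Fin n') → EuclideanSpace ℝ (Fin n'))
    (G : EuclideanSpace ℝ (Fin n1) × EuclideanSpace ℝ (Fin n') →
         EuclideanSpace ℝ (Fin n1) × EuclideanSpace ℝ (Fin n'))
    (hG : ∀ p, G p = (t ^ α1 • (A p.2) (p.1 + B p.2), g p.2))
    (hQS : ∀ p q, t / K * D p q ≤ D (G p) (G q) ∧ D (G p) (G q) ≤ t * K * D p q) :
    ∀ y y', A y = A y' :=
  stmt_9_general n1 n' α1 hα1 D' D hD t K ht A B g G hG hQS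
end

section
/- Let 𝒩 be a finitely generated group quasi-acting properly on ℝ^n (equipped with a proper metric of polynomial growth of degree n). Then any chain of finitely generated subgroups H_0 < H_1 < ⋯ < H_k of 𝒩, where each H_i has infinite index in H_{i+1}, has length k ≤ n. -/
/-!
Put `D γ = dist (A γ 0) 0`. Properness bounds the number of `γ` with `A γ 0` in a unit ball, and a
volume packing argument in `ℝ^n` then gives `#{D ≤ r} = O((r + 1) ^ n)`. On the other hand
`D (γ * η) ≤ D γ + c η`, so right translation by a word of length `m` in a finite symmetric
generating set `X ∋ 1` of `H_{i+1}` moves `D` by `O(m)`. Since `H_i` has infinite index, the images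
of `X ^ m` in the right cosets of `H_i` grow strictly with `m`, so `X ^ m` meets `m + 1` distinct
right cosets, and translating `H_i ∩ {D ≤ r}` by representatives gives
`(m + 1) * #(H_i ∩ {D ≤ r}) ≤ #(H_{i+1} ∩ {D ≤ r + O(m)})`. Along the chain,
`(m + 1) ^ k ≤ #{D ≤ O(m)} = O(m ^ n)`, hence `k ≤ n`.
-/

open Metric MeasureTheory Set Module
open scoped ENNReal Pointwise

section Packing

variable {E : Type*} [NormedAddCommGroup E] [NormedSpace ℝ E] [FiniteDimensional ℝ E]

theorem Finset.card_le_of_isSeparated_of_subset_closedBall {s : Finset E}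
    (hs : IsSeparated 1 (s : Set E)) {x₀ : E} {r : ℝ} (hr : 0 ≤ r)
    (hsub : (s : Set E) ⊆ closedBall x₀ r) : (s.card : ℝ) ≤ (2 * r + 1) ^ finrank ℝ E := by
  borelize E
  let μ : Measure E := Measure.addHaar
  have hdisj : (s : Set E).PairwiseDisjoint fun x => ball x (1 / 2) := by
    intro x hx y hy hxy
    refine ball_disjoint_ball ?_
    have : 1 < edist x y := hs hx hy hxy
    rw [edist_dist, ENNReal.one_lt_ofReal] at this
    linarith
  have hunion : ⋃ x ∈ s, ball x (1 / 2) ⊆ ball x₀ (r + 1 / 2) :=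
    iUnion₂_subset fun x hx => ball_subset_ball' (by linarith [mem_closedBall.mp (hsub hx)])
  have hvol : (s.card : ℝ≥0∞) * (ENNReal.ofReal ((1 / 2) ^ finrank ℝ E) * μ (ball 0 1)) ≤
      ENNReal.ofReal ((r + 1 / 2) ^ finrank ℝ E) * μ (ball 0 1) := by
    calc (s.card : ℝ≥0∞) * (ENNReal.ofReal ((1 / 2) ^ finrank ℝ E) * μ (ball 0 1))
        = μ (⋃ x ∈ s, ball x (1 / 2)) := by
          rw [measure_biUnion_finset hdisj fun x _ => measurableSet_ball,
            Finset.sum_congr rfl fun x _ => μ.addHaar_ball_of_pos x (by norm_num : (0 : ℝ) < 1 / 2),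
            Finset.sum_const, nsmul_eq_mul]
      _ ≤ μ (ball x₀ (r + 1 / 2)) := measure_mono hunion
      _ = ENNReal.ofReal ((r + 1 / 2) ^ finrank ℝ E) * μ (ball 0 1) :=
          μ.addHaar_ball_of_pos _ (by linarith)
  rw [← mul_assoc, ENNReal.mul_le_mul_iff_left (measure_ball_pos μ 0 one_pos).ne'
    measure_ball_lt_top.ne, ← ENNReal.ofReal_natCast, ← ENNReal.ofReal_mul (by positivity),
    ENNReal.ofReal_le_ofReal_iff (by positivity)] at hvol
  calc (s.card : ℝ) = s.card * (1 / 2) ^ finrank ℝ E * 2 ^ finrank ℝ E := by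
        rw [mul_assoc, ← mul_pow]; norm_num
    _ ≤ (r + 1 / 2) ^ finrank ℝ E * 2 ^ finrank ℝ E := by gcongr
    _ = (2 * r + 1) ^ finrank ℝ E := by rw [← mul_pow]; ring

theorem ncard_preimage_closedBall_le {ι : Type*} (f : ι → E) {M : ℕ}
    (hM : ∀ y, {i | dist (f i) y ≤ 1}.Finite ∧ {i | dist (f i) y ≤ 1}.ncard ≤ M) {x₀ : E} {r : ℝ}
    (hr : 0 ≤ r) (hfin : (f ⁻¹' closedBall x₀ r).Finite) :
    ((f ⁻¹' closedBall x₀ r).ncard : ℝ) ≤ M * (2 * r + 1) ^ finrank ℝ E := by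
  set T := f '' (f ⁻¹' closedBall x₀ r)
  have hpack : packingNumber 1 T ≠ ⊤ :=
    ((packingNumber_le_encard_self T).trans_lt (hfin.image f).encard_lt_top).ne
  have hNfin : (maximalSeparatedSet 1 T).Finite := (hfin.image f).subset maximalSeparatedSet_subset
  set N := hNfin.toFinset
  have hcover : f ⁻¹' closedBall x₀ r ⊆ ⋃ y ∈ N, {i | dist (f i) y ≤ 1} := by
    intro i hi
    obtain ⟨y, hy, hiy⟩ := isCover_maximalSeparatedSet hpack (mem_image_of_mem f hi)
    have hdist : dist (f i) y ≤ 1 := by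
      simpa [edist_dist, ENNReal.ofReal_le_one] using hiy
    exact mem_biUnion (hNfin.mem_toFinset.mpr hy) hdist
  have hN : (N.card : ℝ) ≤ (2 * r + 1) ^ finrank ℝ E := by
    refine N.card_le_of_isSeparated_of_subset_closedBall (x₀ := x₀) ?_ hr ?_
    · have h := isSeparated_maximalSeparatedSet (ε := 1) (A := T)
      rw [ENNReal.coe_one] at h
      simpa [N] using h
    · simpa [N] using (maximalSeparatedSet_subset).trans (image_preimage_subset f _)
  have hcount : (f ⁻¹' closedBall x₀ r).ncard ≤ N.card * M := by
    calc (f ⁻¹' closedBall x₀ r).ncard ≤ (⋃ y ∈ N, {i | dist (f i) y ≤ 1}).ncard :=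
          ncard_le_ncard hcover (N.finite_toSet.biUnion fun y _ => (hM y).1)
      _ ≤ ∑ y ∈ N, {i | dist (f i) y ≤ 1}.ncard := N.set_ncard_biUnion_le _
      _ ≤ N.card * M := Finset.sum_le_card_nsmul _ _ _ fun y _ => (hM y).2
  calc ((f ⁻¹' closedBall x₀ r).ncard : ℝ) ≤ N.card * M := by exact_mod_cast hcount
    _ ≤ (2 * r + 1) ^ finrank ℝ E * M := by gcongr
    _ = M * (2 * r + 1) ^ finrank ℝ E := mul_comm _ _

end Packing

theorem dist_apply_mul_le {G X : Type*} [Mul G] [PseudoMetricSpace X] (A : G → X → X) {K C : ℝ}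
    (hlip : ∀ γ x y, dist (A γ x) (A γ y) ≤ K * dist x y + C)
    (hcomp : ∀ γ η x, dist (A γ (A η x)) (A (γ * η) x) ≤ C) (x₀ : X) (γ η : G) :
    dist (A (γ * η) x₀) x₀ ≤ dist (A γ x₀) x₀ + (K * dist (A η x₀) x₀ + 2 * C) := by
  calc dist (A (γ * η) x₀) x₀
      ≤ dist (A (γ * η) x₀) (A γ (A η x₀)) + dist (A γ (A η x₀)) (A γ x₀) + dist (A γ x₀) x₀ :=
        dist_triangle4 _ _ _ _
    _ ≤ C + (K * dist (A η x₀) x₀ + C) + dist (A γ x₀) x₀ := by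
        gcongr
        · rw [dist_comm]; exact hcomp γ η x₀
        · exact hlip γ _ _
    _ = _ := by ring

theorem Subgroup.infinite_image_mk_of_relIndex_eq_zero {G : Type*} [Group G] {H L : Subgroup G}
    (h : H.relIndex L = 0) :
    ((QuotientGroup.mk : G → G ⧸ H) '' L).Infinite := by
  have hsmul : ∀ g : L, g • ((1 : G) : G ⧸ H) = ((g : G) : G ⧸ H) := fun g =>
    congrArg QuotientGroup.mk (mul_one (g : G))
  have hstab : MulAction.stabilizer L ((1 : G) : G ⧸ H) = H.subgroupOf L := by
    ext g
    simp [MulAction.mem_stabilizer_iff, hsmul, QuotientGroup.eq, Subgroup.mem_subgroupOf]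
  have horbit : MulAction.orbit L ((1 : G) : G ⧸ H) = (QuotientGroup.mk : G → G ⧸ H) '' L := by
    ext y
    simp [MulAction.mem_orbit_iff, hsmul]
  have hcard := MulAction.index_stabilizer L ((1 : G) : G ⧸ H)
  rw [hstab, ← Subgroup.relIndex, h, horbit] at hcard
  exact fun hfin => (Set.ncard_pos hfin).mpr ⟨_, 1, L.one_mem, rfl⟩ |>.ne hcard

theorem Subgroup.FG.exists_symmetric_finset_closure_eq {G : Type*} [Group G] [DecidableEq G]
    {L : Subgroup G} (hL : L.FG) :
    ∃ X : Finset G, 1 ∈ X ∧ X⁻¹ = X ∧ Subgroup.closure (X : Set G) = L := by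
  obtain ⟨S, rfl⟩ := hL
  refine ⟨insert 1 (S ∪ S⁻¹), Finset.mem_insert_self _ _, ?_, ?_⟩
  · ext x
    simp only [Finset.inv_insert, inv_one, Finset.mem_insert, Finset.mem_inv', Finset.mem_union,
      inv_inv]
    tauto
  · simp [Subgroup.closure_insert_one, Subgroup.closure_union, Subgroup.closure_inv]

namespace Finset

variable {G : Type*} [Group G] [DecidableEq G]

theorem exists_mem_pow_of_mem_closure {X : Finset G} (hXinv : X⁻¹ = X) {x : G}
    (hx : x ∈ Subgroup.closure (X : Set G)) : ∃ j, x ∈ X ^ j := by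
  induction hx using Subgroup.closure_induction with
  | mem x hx => exact ⟨1, by simpa using hx⟩
  | one => exact ⟨0, by simp⟩
  | mul x y _ _ hx hy =>
    obtain ⟨i, hi⟩ := hx
    obtain ⟨j, hj⟩ := hy
    exact ⟨i + j, pow_add X i j ▸ mul_mem_mul hi hj⟩
  | inv x _ hx =>
    obtain ⟨j, hj⟩ := hx
    exact ⟨j, by rw [← hXinv, inv_pow]; exact inv_mem_inv hj⟩

theorem add_one_le_card_image_pow {α : Type*} [DecidableEq α] {X : Finset G} (hX₁ : 1 ∈ X)
    (hXinv : X⁻¹ = X) (q : G → α) (hq : ∀ a b t, q a = q b → q (a * t) = q (b * t))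
    (hinf : (q '' Subgroup.closure (X : Set G)).Infinite) :
    ∀ m, m + 1 ≤ #((X ^ m).image q) := by
  set I : ℕ → Finset α := fun j => (X ^ j).image q
  have hmono : Monotone I := fun i j hij => image_subset_image (pow_subset_pow_right hX₁ hij)
  have hstrict : ∀ j, I j ⊂ I (j + 1) := by
    intro j
    refine (hmono j.le_succ).ssubset_of_ne fun hj => hinf ?_
    have hstable : ∀ i, I (j + i) ⊆ I j := by
      intro i
      induction i with
      | zero => rfl
      | succ i ih =>
        intro y hy
        obtain ⟨w, hw, rfl⟩ := mem_image.mp hy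
        rw [← add_assoc, pow_succ] at hw
        obtain ⟨v, hv, t, ht, rfl⟩ := mem_mul.mp hw
        obtain ⟨u, hu, huv⟩ := mem_image.mp (ih (mem_image_of_mem q hv))
        rw [← hq u v t huv, hj]
        exact mem_image_of_mem q (pow_succ X j ▸ mul_mem_mul hu ht)
    refine (I j).finite_toSet.subset ?_
    rintro _ ⟨x, hx, rfl⟩
    obtain ⟨i, hi⟩ := exists_mem_pow_of_mem_closure hXinv hx
    exact hstable i (hmono (Nat.le_add_left i j) (mem_image_of_mem q hi))
  intro m
  induction m with
  | zero => simp
  | succ m ih => exact ih.trans_lt (card_lt_card (hstrict m))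

theorem exists_subset_pow_of_relIndex_eq_zero {X : Finset G} (hX₁ : 1 ∈ X) (hXinv : X⁻¹ = X)
    {H : Subgroup G} (hinf : H.relIndex (Subgroup.closure (X : Set G)) = 0) (m : ℕ) :
    ∃ U ⊆ X ^ m, m + 1 ≤ #U ∧ ∀ x ∈ U, ∀ y ∈ U, x * y⁻¹ ∈ H → x = y := by
  classical
  -- The right coset `H * x` is encoded as the left coset `x⁻¹ * H`, so that right
  -- multiplication by `t` acts on it (as left multiplication by `t⁻¹`).
  set q : G → G ⧸ H := fun g => ((g⁻¹ : G) : G ⧸ H)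
  have hq : ∀ x y, q x = q y ↔ x * y⁻¹ ∈ H := fun x y => by simp [q, QuotientGroup.eq]
  have hqmul : ∀ x y t, q x = q y → q (x * t) = q (y * t) := fun x y t h => by
    rw [hq] at h ⊢; simpa [mul_assoc] using h
  have hqinf : (q '' Subgroup.closure (X : Set G)).Infinite := by
    rw [show q = QuotientGroup.mk ∘ Inv.inv from rfl, Set.image_comp, Set.image_inv_eq_inv,
      inv_coe_set]
    exact Subgroup.infinite_image_mk_of_relIndex_eq_zero hinf
  obtain ⟨U, hUX, hUinj, hUimg⟩ := exists_subset_injOn_image_eq_of_surjOn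
    ((X ^ m : Finset G) : Set G) ((X ^ m).image q) (by rw [coe_image]; exact surjOn_image _ _)
  refine ⟨U, mod_cast hUX, ?_, fun x hx y hy h => hUinj hx hy ((hq x y).mpr h)⟩
  rw [← card_image_of_injOn hUinj, hUimg]
  exact add_one_le_card_image_pow hX₁ hXinv q hqmul hqinf m

end Finset

theorem le_of_forall_pow_le_mul_pow {k n : ℕ} {Q : ℝ}
    (h : ∀ m : ℕ, ((m : ℝ) + 1) ^ k ≤ Q * ((m : ℝ) + 1) ^ n) : k ≤ n := by
  by_contra! hnk
  set x : ℝ := (⌈Q⌉₊ : ℝ) + 1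
  have hQx : Q < x := (Nat.le_ceil Q).trans_lt (lt_add_one _)
  have hx : 1 ≤ x := by simp [x]
  have := calc x ^ (n + 1) ≤ x ^ k := pow_le_pow_right₀ hx hnk
    _ ≤ Q * x ^ n := h _
    _ < x * x ^ n := mul_lt_mul_of_pos_right hQx (by positivity)
    _ = x ^ (n + 1) := (pow_succ' x n).symm
  exact this.false

section Displacement

variable {G : Type*} [Group G] (D : G → ℝ)

theorem le_add_mul_of_mem_pow [DecidableEq G] {X : Finset G} {c : ℝ}
    (hX : ∀ x ∈ X, ∀ γ, D (γ * x) ≤ D γ + c) :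
    ∀ (m : ℕ), ∀ x ∈ X ^ m, ∀ γ, D (γ * x) ≤ D γ + m * c
  | 0, x, hx, γ => by simp_all
  | m + 1, x, hx, γ => by
    rw [pow_succ] at hx
    obtain ⟨y, hy, t, ht, rfl⟩ := Finset.mem_mul.mp hx
    calc D (γ * (y * t)) = D (γ * y * t) := by rw [mul_assoc]
      _ ≤ D (γ * y) + c := hX t ht _
      _ ≤ D γ + m * c + c := by gcongr; exact le_add_mul_of_mem_pow hX m y hy γ
      _ = D γ + (m + 1 : ℕ) * c := by push_cast; ring

theorem ncard_sublevel_mul_ncard_le {H L : Subgroup G} (hHL : H ≤ L) {U : Set G} (hUL : U ⊆ L)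
    (hU : ∀ x ∈ U, ∀ y ∈ U, x * y⁻¹ ∈ H → x = y) {r R : ℝ}
    (hUD : ∀ x ∈ U, ∀ γ, D (γ * x) ≤ D γ + R) (hfin : {γ | D γ ≤ r + R}.Finite) :
    {γ ∈ H | D γ ≤ r}.ncard * U.ncard ≤ {γ ∈ L | D γ ≤ r + R}.ncard := by
  have hinj : InjOn (fun p : G × G => p.1 * p.2) ({γ ∈ H | D γ ≤ r} ×ˢ U) := by
    rintro ⟨h, x⟩ ⟨hh, hx⟩ ⟨h', x'⟩ ⟨hh', hx'⟩ (he : h * x = h' * x')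
    have hxx' : x * x'⁻¹ = h⁻¹ * h' := by
      calc x * x'⁻¹ = h⁻¹ * (h * x) * x'⁻¹ := by group
        _ = h⁻¹ * h' := by rw [he]; group
    obtain rfl : x = x' := hU x hx x' hx' (hxx' ▸ mul_mem (inv_mem hh.1) hh'.1)
    rw [mul_right_cancel he]
  rw [← ncard_prod, ← hinj.ncard_image]
  refine ncard_le_ncard ?_ (hfin.subset fun γ hγ => hγ.2)
  rintro _ ⟨⟨h, x⟩, ⟨⟨hh, hhD⟩, hx⟩, rfl⟩
  exact ⟨L.mul_mem (hHL hh) (hUL hx), (hUD x hx h).trans (by linarith)⟩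

theorem exists_mul_ncard_sublevel_le_of_relIndex_eq_zero (hfin : ∀ r, {γ | D γ ≤ r}.Finite)
    (c : G → ℝ) (hc : ∀ γ s, D (γ * s) ≤ D γ + c s) {H L : Subgroup G} (hHL : H ≤ L)
    (hL : L.FG) (hinf : H.relIndex L = 0) :
    ∃ a, 0 ≤ a ∧ ∀ (m : ℕ) (r : ℝ),
      (m + 1) * {γ ∈ H | D γ ≤ r}.ncard ≤ {γ ∈ L | D γ ≤ r + a * (m + 1)}.ncard := by
  classical
  obtain ⟨X, hX₁, hXinv, rfl⟩ := hL.exists_symmetric_finset_closure_eq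
  obtain ⟨a, ha⟩ := (X.image c).bddAbove
  have hXc : ∀ x ∈ X, c x ≤ a := fun x hx => ha (Finset.mem_coe.mpr (Finset.mem_image_of_mem c hx))
  have ha₀ : 0 ≤ a := by
    have h := hc 1 1
    rw [mul_one] at h
    linarith [hXc 1 hX₁]
  refine ⟨a, ha₀, fun m r => ?_⟩
  obtain ⟨U, hUX, hUcard, hU⟩ := Finset.exists_subset_pow_of_relIndex_eq_zero hX₁ hXinv hinf m
  have hUL : (U : Set G) ⊆ Subgroup.closure (X : Set G) := by
    intro x hx
    rw [← Set.pow_mul_subgroupClosure ⟨1, hX₁⟩ m, ← Finset.coe_pow]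
    simpa using Set.mul_mem_mul (hUX hx) (Subgroup.one_mem (Subgroup.closure (X : Set G)))
  have hUD : ∀ x ∈ (U : Set G), ∀ γ, D (γ * x) ≤ D γ + a * (m + 1) := by
    intro x hx γ
    have := le_add_mul_of_mem_pow D (fun x hx γ => (hc γ x).trans (by linarith [hXc x hx]))
      m x (hUX hx) γ
    nlinarith
  calc (m + 1) * {γ ∈ H | D γ ≤ r}.ncard ≤ {γ ∈ H | D γ ≤ r}.ncard * (U : Set G).ncard := by
        rw [mul_comm, ncard_coe_finset]
        exact Nat.mul_le_mul_left _ hUcard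
    _ ≤ _ := ncard_sublevel_mul_ncard_le D hHL hUL hU hUD (hfin _)

theorem exists_pow_le_ncard_sublevel_of_chain (hfin : ∀ r, {γ | D γ ≤ r}.Finite) (c : G → ℝ)
    (hc : ∀ γ s, D (γ * s) ≤ D γ + c s) :
    ∀ {k : ℕ} (H : Fin (k + 1) → Subgroup G), (∀ i : Fin k, (H i.succ).FG) →
      (∀ i : Fin k, H i.castSucc ≤ H i.succ) →
      (∀ i : Fin k, (H i.castSucc).relIndex (H i.succ) = 0) →
      ∃ b, 0 ≤ b ∧ ∀ m : ℕ, (m + 1) ^ k ≤ {γ ∈ H (Fin.last k) | D γ ≤ b * (m + 1)}.ncard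
  | 0, H, _, _, _ => by
    refine ⟨max (D 1) 0, le_max_right _ _, fun m => ?_⟩
    have h1 : D 1 ≤ max (D 1) 0 * (m + 1) := by
      have : (1 : ℝ) ≤ m + 1 := by simp
      nlinarith [le_max_left (D 1) 0, le_max_right (D 1) 0]
    rw [pow_zero, Nat.one_le_iff_ne_zero, ← Nat.pos_iff_ne_zero]
    exact (ncard_pos ((hfin _).subset fun γ hγ => hγ.2)).mpr ⟨1, (H _).one_mem, h1⟩
  | k + 1, H, hfg, hchain, hinf => by
    obtain ⟨b, hb, hbound⟩ := exists_pow_le_ncard_sublevel_of_chain hfin c hc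
      (fun i => H i.castSucc) (fun i => Fin.succ_castSucc i ▸ hfg i.castSucc)
      (fun i => hchain i.castSucc) (fun i => hinf i.castSucc)
    obtain ⟨a, ha, hstep⟩ := exists_mul_ncard_sublevel_le_of_relIndex_eq_zero D hfin c hc
      (hchain (Fin.last k)) (hfg (Fin.last k)) (hinf (Fin.last k))
    refine ⟨b + a, add_nonneg hb ha, fun m => ?_⟩
    calc (m + 1) ^ (k + 1) = (m + 1) * (m + 1) ^ k := pow_succ' _ _
      _ ≤ (m + 1) * {γ ∈ H (Fin.last k).castSucc | D γ ≤ b * (m + 1)}.ncard :=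
        Nat.mul_le_mul_left _ (hbound m)
      _ ≤ {γ ∈ H (Fin.last (k + 1)) | D γ ≤ b * (m + 1) + a * (m + 1)}.ncard := hstep m _
      _ = {γ ∈ H (Fin.last (k + 1)) | D γ ≤ (b + a) * (m + 1)}.ncard := by rw [add_mul]

theorem chain_length_le_of_growth (hfin : ∀ r, {γ | D γ ≤ r}.Finite) {n : ℕ} {Q : ℝ}
    (hgrowth : ∀ r, 0 ≤ r → ({γ | D γ ≤ r}.ncard : ℝ) ≤ Q * (r + 1) ^ n) (c : G → ℝ)
    (hc : ∀ γ s, D (γ * s) ≤ D γ + c s) {k : ℕ} (H : Fin (k + 1) → Subgroup G)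
    (hfg : ∀ i : Fin k, (H i.succ).FG) (hchain : ∀ i : Fin k, H i.castSucc ≤ H i.succ)
    (hinf : ∀ i : Fin k, (H i.castSucc).relIndex (H i.succ) = 0) : k ≤ n := by
  obtain ⟨b, hb, hbound⟩ := exists_pow_le_ncard_sublevel_of_chain D hfin c hc H hfg hchain hinf
  have hQ : 0 ≤ Q := by simpa using (Nat.cast_nonneg _).trans (hgrowth 0 le_rfl)
  refine le_of_forall_pow_le_mul_pow (Q := Q * (b + 1) ^ n) fun m => ?_
  have hm : (0 : ℝ) ≤ m := m.cast_nonneg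
  calc ((m : ℝ) + 1) ^ k ≤ {γ ∈ H (Fin.last k) | D γ ≤ b * (m + 1)}.ncard := by
        exact_mod_cast hbound m
    _ ≤ {γ | D γ ≤ b * (m + 1)}.ncard := by
        exact_mod_cast ncard_le_ncard (s := {γ ∈ H (Fin.last k) | D γ ≤ b * (m + 1)})
          (fun γ hγ => hγ.2) (hfin _)
    _ ≤ Q * (b * (m + 1) + 1) ^ n := hgrowth _ (by positivity)
    _ ≤ Q * ((b + 1) * (m + 1)) ^ n := by gcongr; nlinarith
    _ = Q * (b + 1) ^ n * (m + 1) ^ n := by rw [mul_pow, mul_assoc]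

end Displacement

theorem stmt_13_general (n : ℕ) (𝒩 : Type*) [Group 𝒩]
    (A : 𝒩 → EuclideanSpace ℝ (Fin n) → EuclideanSpace ℝ (Fin n))
    (K C : ℝ)
    (hqi : ∀ γ x y, dist x y / K - C ≤ dist (A γ x) (A γ y) ∧
      dist (A γ x) (A γ y) ≤ K * dist x y + C)
    (hcomp : ∀ γ η x, dist (A γ (A η x)) (A (γ * η) x) ≤ C)
    (hproper : ∀ R : ℝ, ∃ M : ℕ, ∀ x y : EuclideanSpace ℝ (Fin n),
      {γ : 𝒩 | ∃ p, dist p x ≤ R ∧ dist (A γ p) y ≤ R}.Finite ∧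
      {γ : 𝒩 | ∃ p, dist p x ≤ R ∧ dist (A γ p) y ≤ R}.ncard ≤ M)
    (k : ℕ) (H : Fin (k + 1) → Subgroup 𝒩)
    (hfg : ∀ i, (H i).FG)
    (hchain : ∀ i : Fin k, H i.castSucc ≤ H i.succ)
    (hinf : ∀ i : Fin k, (H i.castSucc).relIndex (H i.succ) = 0) :
    k ≤ n := by
  set D : 𝒩 → ℝ := fun γ => dist (A γ 0) 0
  have hfin : ∀ r, {γ | D γ ≤ r}.Finite := fun r =>
    ((hproper |r|).choose_spec 0 0).1.subset fun γ (hγ : D γ ≤ r) =>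
      ⟨0, by simp, hγ.trans (le_abs_self r)⟩
  obtain ⟨M, hM⟩ := hproper 1
  have hfiber : ∀ y, {γ | dist (A γ 0) y ≤ 1}.Finite ∧ {γ | dist (A γ 0) y ≤ 1}.ncard ≤ M := by
    intro y
    have hsub : {γ | dist (A γ 0) y ≤ 1} ⊆ {γ | ∃ p, dist p 0 ≤ 1 ∧ dist (A γ p) y ≤ 1} :=
      fun γ hγ => ⟨0, by simp, hγ⟩
    exact ⟨(hM 0 y).1.subset hsub, (ncard_le_ncard hsub (hM 0 y).1).trans (hM 0 y).2⟩
  have hgrowth : ∀ r, 0 ≤ r → ({γ | D γ ≤ r}.ncard : ℝ) ≤ M * 2 ^ n * (r + 1) ^ n := by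
    intro r hr
    have hball := ncard_preimage_closedBall_le (fun γ => A γ 0) hfiber hr (hfin r)
    rw [finrank_euclideanSpace_fin] at hball
    calc _ ≤ (M : ℝ) * (2 * r + 1) ^ n := hball
      _ ≤ M * (2 * (r + 1)) ^ n := by gcongr; linarith
      _ = M * 2 ^ n * (r + 1) ^ n := by rw [mul_pow, mul_assoc]
  exact chain_length_le_of_growth D hfin hgrowth (fun η => K * D η + 2 * C)
    (dist_apply_mul_le A (fun γ x y => (hqi γ x y).2) hcomp 0) H (fun i => hfg i.succ) hchain hinf

/-- If a finitely generated group quasi-acts properly on `ℝ^n`, then any chain of finitely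
generated subgroups, each of infinite index in the next, has length at most `n`. -/
theorem stmt_13 (n : ℕ) (𝒩 : Type*) [Group 𝒩]
    (A : 𝒩 → EuclideanSpace ℝ (Fin n) → EuclideanSpace ℝ (Fin n))
    (K C : ℝ) (hK : 1 ≤ K) (hC : 0 ≤ C)
    (hqi : ∀ γ x y, dist x y / K - C ≤ dist (A γ x) (A γ y) ∧
      dist (A γ x) (A γ y) ≤ K * dist x y + C)
    (hcomp : ∀ γ η x, dist (A γ (A η x)) (A (γ * η) x) ≤ C)
    (hproper : ∀ R : ℝ, ∃ M : ℕ, ∀ x y : EuclideanSpace ℝ (Fin n),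
      {γ : 𝒩 | ∃ p, dist p x ≤ R ∧ dist (A γ p) y ≤ R}.Finite ∧
      {γ : 𝒩 | ∃ p, dist p x ≤ R ∧ dist (A γ p) y ≤ R}.ncard ≤ M)
    (k : ℕ) (H : Fin (k + 1) → Subgroup 𝒩)
    (hfg : ∀ i, (H i).FG)
    (hchain : ∀ i : Fin k, H i.castSucc ≤ H i.succ)
    (hinf : ∀ i : Fin k, (H i.castSucc).relIndex (H i.succ) = 0) :
    k ≤ n :=
  stmt_13_general n 𝒩 A K C hqi hcomp hproper k H hfg hchain hinf
end

section
/- Let γ be an element of a group of K-bilipschitz almost translations of (ℝ^n, D), γ(x_1,…,x_r) = (x_1 + B_{1,γ}(x_2,…,x_r), …, x_{r−1} + B_{r−1,γ}(x_r), x_r + B_{r,γ}), with each B_{j,γ} bounded by B^max_{j,γ}. Then for all y, y' ∈ ℝ^{n_{i+1}} × ⋯ × ℝ^{n_r}: |B_{i,γ}(y) − B_{i,γ}(y')| ≤ 2K^{α_i} max_{j>i} (B^max_{j,γ})^{α_i/α_j}. -/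
/-!
The `i`-th coordinate of `γ^[m] x - γ^[m] x'` is a difference of Birkhoff sums of `B i`, so
bilipschitzness of all the iterates bounds these differences uniformly in `m` when
`x i = x' i`. Moving `x` to `γ x` in the coordinates above `i` changes `x` by at most
`c = max_{j>i} (B^max_j)^{1/α_j}` in `D`, and turns the Birkhoff sum of `x` into a shifted one,
so `B i` oscillates by at most `(K c)^{α_i}` along every orbit. Hence, with `x'` replaced by the
point agreeing with `x` up to index `i` and with `x'` above it, the `m` terms of a uniformly
bounded sum each lie within `2 (K c)^{α_i}` of `B i x - B i x'`, and letting `m → ∞` gives the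
bound.
-/

open Finset

theorem le_of_forall_nat_mul_le_add {a b c : ℝ} (h : ∀ m : ℕ, m * a ≤ b + m * c) : a ≤ c := by
  by_contra! hca
  obtain ⟨m, hm⟩ := exists_nat_gt (b / (a - c))
  have := (div_lt_iff₀ (sub_pos.2 hca)).1 hm
  linarith [h m]

theorem norm_le_of_norm_sum_range_le_of_norm_sub_le {F : Type*} [SeminormedAddCommGroup F]
    [NormedSpace ℝ F] {w : ℕ → F} {d : F} {M C : ℝ} (hsum : ∀ m, ‖∑ k ∈ range m, w k‖ ≤ M)
    (hw : ∀ k, ‖w k - d‖ ≤ C) : ‖d‖ ≤ C := by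
  refine le_of_forall_nat_mul_le_add (b := M) fun m => ?_
  calc (m : ℝ) * ‖d‖ = ‖∑ k ∈ range m, w k - ∑ k ∈ range m, (w k - d)‖ := by
        rw [sum_sub_distrib, sub_sub_cancel, sum_const, card_range, ← Nat.cast_smul_eq_nsmul ℝ,
          norm_smul, Real.norm_natCast]
    _ ≤ ‖∑ k ∈ range m, w k‖ + ∑ k ∈ range m, ‖w k - d‖ :=
        (norm_sub_le _ _).trans (add_le_add_right (norm_sum_le _ _) _)
    _ ≤ M + m * C := by
        grw [hsum m, sum_le_sum fun k _ => hw k]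
        simp

section AlmostTranslation

variable {ι : Type*} {E : ι → Type*} {B : ∀ i, (∀ j, E j) → E i} {γ : (∀ j, E j) → ∀ j, E j}

theorem iterate_apply_eq_add_birkhoffSum [∀ i, AddCommMonoid (E i)]
    (hγ : ∀ x i, γ x i = x i + B i x) (m : ℕ) (z : ∀ j, E j) (i : ι) :
    γ^[m] z i = z i + birkhoffSum γ (B i) m z := by
  induction m generalizing z with
  | zero => simp
  | succ m ih => rw [Function.iterate_succ_apply, ih, hγ, birkhoffSum_succ', add_assoc]

theorem norm_birkhoffSum_sub_birkhoffSum_le [Finite ι] [∀ i, SeminormedAddCommGroup (E i)]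
    {α : ι → ℝ} {D : (∀ j, E j) → (∀ j, E j) → ℝ} {K : ℝ} (hγ : ∀ x i, γ x i = x i + B i x)
    (hD : ∀ x y, D x y = ⨆ j, ‖x j - y j‖ ^ (1 / α j))
    (hlip : ∀ (m : ℕ) p q, D (γ^[m] p) (γ^[m] q) ≤ K * D p q) {i : ι} (hα : 0 < α i)
    {u v : ∀ j, E j} (huv : u i = v i) (m : ℕ) :
    ‖birkhoffSum γ (B i) m u - birkhoffSum γ (B i) m v‖ ≤ (K * D u v) ^ α i := by
  have hcoord : γ^[m] u i - γ^[m] v i = birkhoffSum γ (B i) m u - birkhoffSum γ (B i) m v := by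
    rw [iterate_apply_eq_add_birkhoffSum hγ, iterate_apply_eq_add_birkhoffSum hγ, huv,
      add_sub_add_left_eq_sub]
  have h : ‖birkhoffSum γ (B i) m u - birkhoffSum γ (B i) m v‖ ^ (α i)⁻¹ ≤ K * D u v := by
    rw [← one_div, ← hcoord]
    calc ‖γ^[m] u i - γ^[m] v i‖ ^ (1 / α i) ≤ D (γ^[m] u) (γ^[m] v) :=
          (hD _ _).symm ▸ le_ciSup (f := fun j => ‖γ^[m] u j - γ^[m] v j‖ ^ (1 / α j))
            (Set.finite_range _).bddAbove i
      _ ≤ K * D u v := hlip m u v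
  exact (Real.rpow_inv_le_iff_of_pos (norm_nonneg _)
    ((Real.rpow_nonneg (norm_nonneg _) _).trans h) hα).1 h

variable [Preorder ι]

theorem exists_eq_of_lt_and_eq_of_not_lt (x y : ∀ j, E j) (i : ι) :
    ∃ v : ∀ j, E j, (∀ j, i < j → v j = y j) ∧ ∀ j, ¬i < j → v j = x j := by
  classical
  exact ⟨(Set.Ioi i).piecewise y x, fun j hj => Set.piecewise_eq_of_mem _ _ _ hj,
    fun j hj => Set.piecewise_eq_of_notMem _ _ _ hj⟩

theorem iterate_apply_eq_of_forall_lt [∀ i, AddCommMonoid (E i)]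
    (hγ : ∀ x i, γ x i = x i + B i x)
    (hB : ∀ i x x', (∀ j, i < j → x j = x' j) → B i x = B i x') {i : ι} {u v : ∀ j, E j}
    (huv : ∀ j, i < j → u j = v j) (k : ℕ) : ∀ j, i < j → γ^[k] u j = γ^[k] v j := by
  induction k with
  | zero => simpa using huv
  | succ k ih =>
    intro j hj
    rw [Function.iterate_succ_apply', Function.iterate_succ_apply', hγ, hγ, ih j hj,
      hB j _ _ fun l hl => ih l (hj.trans hl)]

theorem birkhoffSum_eq_of_forall_lt [∀ i, AddCommMonoid (E i)]
    (hγ : ∀ x i, γ x i = x i + B i x)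
    (hB : ∀ i x x', (∀ j, i < j → x j = x' j) → B i x = B i x') {i : ι} {u v : ∀ j, E j}
    (huv : ∀ j, i < j → u j = v j) (m : ℕ) :
    birkhoffSum γ (B i) m u = birkhoffSum γ (B i) m v :=
  sum_congr rfl fun k _ => hB i _ _ (iterate_apply_eq_of_forall_lt hγ hB huv k)

variable [Finite ι] [∀ i, SeminormedAddCommGroup (E i)] {α : ι → ℝ}
  {D : (∀ j, E j) → (∀ j, E j) → ℝ} {K : ℝ}

theorem norm_sub_apply_iterate_le (hγ : ∀ x i, γ x i = x i + B i x)
    (hB : ∀ i x x', (∀ j, i < j → x j = x' j) → B i x = B i x')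
    (hD : ∀ x y, D x y = ⨆ j, ‖x j - y j‖ ^ (1 / α j))
    (hlip : ∀ (m : ℕ) p q, D (γ^[m] p) (γ^[m] q) ≤ K * D p q) (hK : 0 ≤ K)
    (hα : ∀ j, 0 < α j) {i : ι} {c : ℝ} (hc0 : 0 ≤ c)
    (hc : ∀ j, i < j → ∀ x, ‖B j x‖ ^ (1 / α j) ≤ c) (z : ∀ j, E j) (m : ℕ) :
    ‖B i z - B i (γ^[m] z)‖ ≤ (K * c) ^ α i := by
  have : Nonempty ι := ⟨i⟩
  obtain ⟨v, hv_above, hv_below⟩ := exists_eq_of_lt_and_eq_of_not_lt z (γ z) i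
  have hsum : birkhoffSum γ (B i) m z - birkhoffSum γ (B i) m v = B i z - B i (γ^[m] z) := by
    rw [birkhoffSum_eq_of_forall_lt hγ hB hv_above, ← neg_sub,
      birkhoffSum_apply_sub_birkhoffSum, neg_sub]
  have hzv : D z v ≤ c := by
    rw [hD]
    refine ciSup_le fun j => ?_
    by_cases hj : i < j
    · rw [hv_above j hj, hγ, sub_add_cancel_left, norm_neg]
      exact hc j hj z
    · rwa [hv_below j hj, sub_self, norm_zero, Real.zero_rpow (one_div_pos.2 (hα j)).ne']
  have hD0 : 0 ≤ D z v := hD z v ▸ Real.iSup_nonneg fun j => Real.rpow_nonneg (norm_nonneg _) _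
  calc ‖B i z - B i (γ^[m] z)‖ = ‖birkhoffSum γ (B i) m z - birkhoffSum γ (B i) m v‖ := by
        rw [hsum]
    _ ≤ (K * D z v) ^ α i :=
        norm_birkhoffSum_sub_birkhoffSum_le hγ hD hlip (hα i) (hv_below i (lt_irrefl i)).symm m
    _ ≤ (K * c) ^ α i := by gcongr; exact (hα i).le

theorem norm_sub_le_two_mul_rpow [∀ i, NormedSpace ℝ (E i)] (hγ : ∀ x i, γ x i = x i + B i x)
    (hB : ∀ i x x', (∀ j, i < j → x j = x' j) → B i x = B i x')
    (hD : ∀ x y, D x y = ⨆ j, ‖x j - y j‖ ^ (1 / α j))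
    (hlip : ∀ (m : ℕ) p q, D (γ^[m] p) (γ^[m] q) ≤ K * D p q) (hK : 0 ≤ K)
    (hα : ∀ j, 0 < α j) {i : ι} {c : ℝ} (hc0 : 0 ≤ c)
    (hc : ∀ j, i < j → ∀ x, ‖B j x‖ ^ (1 / α j) ≤ c) (x x' : ∀ j, E j) :
    ‖B i x - B i x'‖ ≤ 2 * (K * c) ^ α i := by
  obtain ⟨q, hq_above, hq_below⟩ := exists_eq_of_lt_and_eq_of_not_lt x x' i
  have hq : B i q = B i x' := hB i _ _ hq_above
  have hosc := norm_sub_apply_iterate_le hγ hB hD hlip hK hα hc0 hc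
  refine norm_le_of_norm_sum_range_le_of_norm_sub_le
    (w := fun k => B i (γ^[k] x) - B i (γ^[k] q)) (M := (K * D x q) ^ α i) (fun m => ?_)
    fun k => ?_
  · rw [sum_sub_distrib]
    exact norm_birkhoffSum_sub_birkhoffSum_le hγ hD hlip (hα i)
      (hq_below i (lt_irrefl i)).symm m
  · calc ‖B i (γ^[k] x) - B i (γ^[k] q) - (B i x - B i x')‖
          = ‖(B i x - B i (γ^[k] x)) - (B i q - B i (γ^[k] q))‖ := by
            rw [← hq, ← norm_neg]; congr 1; abel
      _ ≤ ‖B i x - B i (γ^[k] x)‖ + ‖B i q - B i (γ^[k] q)‖ := norm_sub_le _ _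
      _ ≤ 2 * (K * c) ^ α i := by linarith [hosc x k, hosc q k]

end AlmostTranslation

theorem stmt_16_general (r : ℕ) (n : Fin (r + 1) → ℕ) (α : Fin (r + 1) → ℝ)
    (hα : ∀ i, 0 < α i)
    (D : (∀ i, EuclideanSpace ℝ (Fin (n i))) → (∀ i, EuclideanSpace ℝ (Fin (n i))) → ℝ)
    (hD : ∀ x y, D x y = ⨆ i, ‖x i - y i‖ ^ (1 / α i))
    (K : ℝ) (hK : 1 ≤ K)
    (B : ∀ i : Fin (r + 1),
      (∀ j, EuclideanSpace ℝ (Fin (n j))) → EuclideanSpace ℝ (Fin (n i)))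
    (hBdep : ∀ i x x', (∀ j, i < j → x j = x' j) → B i x = B i x')
    (γ : (∀ i, EuclideanSpace ℝ (Fin (n i))) → ∀ i, EuclideanSpace ℝ (Fin (n i)))
    (hγ : ∀ x i, γ x i = x i + B i x)
    (Bmax : Fin (r + 1) → ℝ) (hBmax : ∀ i x, ‖B i x‖ ≤ Bmax i)
    (hbilip : ∀ (m : ℕ) p q, D p q / K ≤ D (γ^[m] p) (γ^[m] q) ∧
      D (γ^[m] p) (γ^[m] q) ≤ K * D p q) :
    ∀ i x x', ‖B i x - B i x'‖ ≤
      ⨆ j : {j : Fin (r + 1) // i < j},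
        2 * K ^ α i * Bmax (j : Fin (r + 1)) ^ (α i / α (j : Fin (r + 1))) := by
  intro i x x'
  rcases isEmpty_or_nonempty {j // i < j} with hempty | _
  · rw [Real.iSup_of_isEmpty, hBdep i x x' fun j hj => (hempty.false ⟨j, hj⟩).elim, sub_self,
      norm_zero]
  obtain ⟨jm, hjm⟩ := Finite.exists_max fun j : {j // i < j} => Bmax j ^ (1 / α j)
  have hBmax0 : 0 ≤ Bmax jm := (norm_nonneg _).trans (hBmax jm 0)
  have hK0 : 0 ≤ K := zero_le_one.trans hK
  calc ‖B i x - B i x'‖ ≤ 2 * (K * Bmax jm ^ (1 / α jm)) ^ α i :=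
        norm_sub_le_two_mul_rpow hγ hBdep hD (fun m p q => (hbilip m p q).2) hK0 hα
          (Real.rpow_nonneg hBmax0 _) (fun j hj z => (Real.rpow_le_rpow (norm_nonneg _)
            (hBmax j z) (one_div_pos.2 (hα j)).le).trans (hjm ⟨j, hj⟩)) x x'
    _ = 2 * K ^ α i * Bmax jm ^ (α i / α jm) := by
        rw [Real.mul_rpow hK0 (Real.rpow_nonneg hBmax0 _), ← Real.rpow_mul hBmax0,
          one_div_mul_eq_div, mul_assoc]
    _ ≤ _ := le_ciSup (f := fun j : {j // i < j} => 2 * K ^ α i * Bmax j ^ (α i / α j))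
        (Set.finite_range _).bddAbove jm

/-- Oscillation bound for the translation parts of a `K`-bilipschitz almost translation of
`(ℝ^n, D)`: `|B_{i,γ}(y) − B_{i,γ}(y')| ≤ max_{j>i} 2K^{α_i}(B^max_{j,γ})^{α_i/α_j}`. -/
theorem stmt_16 (r : ℕ) (n : Fin (r + 1) → ℕ) (α : Fin (r + 1) → ℝ)
    (hα : ∀ i, 0 < α i) (hmono : StrictMono α)
    (D : (∀ i, EuclideanSpace ℝ (Fin (n i))) → (∀ i, EuclideanSpace ℝ (Fin (n i))) → ℝ)
    (hD : ∀ x y, D x y = ⨆ i, ‖x i - y i‖ ^ (1 / α i))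
    (K : ℝ) (hK : 1 ≤ K)
    (B : ∀ i : Fin (r + 1),
      (∀ j, EuclideanSpace ℝ (Fin (n j))) → EuclideanSpace ℝ (Fin (n i)))
    (hBdep : ∀ i x x', (∀ j, i < j → x j = x' j) → B i x = B i x')
    (γ : (∀ i, EuclideanSpace ℝ (Fin (n i))) → ∀ i, EuclideanSpace ℝ (Fin (n i)))
    (hγ : ∀ x i, γ x i = x i + B i x)
    (Bmax : Fin (r + 1) → ℝ) (hBmax : ∀ i x, ‖B i x‖ ≤ Bmax i)
    (hbilip : ∀ (m : ℕ) p q, D p q / K ≤ D (γ^[m] p) (γ^[m] q) ∧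
      D (γ^[m] p) (γ^[m] q) ≤ K * D p q) :
    ∀ i x x', ‖B i x - B i x'‖ ≤
      ⨆ j : {j : Fin (r + 1) // i < j},
        2 * K ^ α i * Bmax (j : Fin (r + 1)) ^ (α i / α (j : Fin (r + 1))) :=
  stmt_16_general r n α hα D hD K hK B hBdep γ hγ Bmax hBmax hbilip
end

section
/- For almost translations γ, η of (ℝ^n, D) as above, the bound functions satisfy: (i) B^max_{i,γη} ≤ B^max_{i,γ} + B^max_{i,η}; and (ii) l·B^max_{i,γ} ≤ B^max_{i,γ^l} + l·ε_{i,γ}, where ε_{i,γ} = max_{j>i} 2K^{α_i}(B^max_{j,γ})^{α_i/α_j}. -/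
/-!
The `i`-th coordinate of `γ^[l] x - x` telescopes into the sum of `B_{i,γ}` along the orbit
`x, γ x, …, γ^[l-1] x`, and by the oscillation bound each summand is within `ε_{i,γ}` of
`B_{i,γ}(x)`.
-/

open Finset

section AlmostTranslation

variable {X E : Type*} {π : X → E} {γ η : X → X} {B C : X → E}

theorem norm_comp_displacement_le [SeminormedAddCommGroup E] {M N : ℝ}
    (hγ : ∀ x, π (γ x) = π x + B x) (hη : ∀ x, π (η x) = π x + C x)
    (hB : ∀ x, ‖B x‖ ≤ M) (hC : ∀ x, ‖C x‖ ≤ N) (x : X) :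
    ‖π (γ (η x)) - π x‖ ≤ M + N :=
  calc ‖π (γ (η x)) - π x‖ = ‖B (η x) + C x‖ := by rw [hγ, hη]; abel_nf
    _ ≤ M + N := norm_add_le_of_le (hB _) (hC x)

theorem iterate_displacement_eq_sum [AddCommGroup E] (hγ : ∀ x, π (γ x) = π x + B x)
    (x : X) (l : ℕ) : π (γ^[l] x) - π x = ∑ k ∈ range l, B (γ^[k] x) :=
  calc π (γ^[l] x) - π x = ∑ k ∈ range l, (π (γ^[k + 1] x) - π (γ^[k] x)) :=
        (sum_range_sub (fun k ↦ π (γ^[k] x)) l).symm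
    _ = ∑ k ∈ range l, B (γ^[k] x) := sum_congr rfl fun k _ ↦ by
        rw [Function.iterate_succ_apply', hγ, add_sub_cancel_left]

theorem norm_nsmul_sub_iterate_displacement_le [SeminormedAddCommGroup E] {ε : ℝ}
    (hγ : ∀ x, π (γ x) = π x + B x) (hosc : ∀ x x', ‖B x - B x'‖ ≤ ε)
    (x : X) (l : ℕ) :
    ‖l • B x - (π (γ^[l] x) - π x)‖ ≤ l * ε := by
  have hconst : l • B x = ∑ _k ∈ range l, B x := by simp
  rw [iterate_displacement_eq_sum hγ, hconst, ← sum_sub_distrib]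
  simpa using norm_sum_le_of_le (range l) fun k _ ↦ hosc x (γ^[k] x)

theorem mul_norm_le_norm_iterate_displacement_add [SeminormedAddCommGroup E] [NormedSpace ℝ E]
    {ε : ℝ} (hγ : ∀ x, π (γ x) = π x + B x) (hosc : ∀ x x', ‖B x - B x'‖ ≤ ε)
    (x : X) (l : ℕ) :
    l * ‖B x‖ ≤ ‖π (γ^[l] x) - π x‖ + l * ε :=
  calc l * ‖B x‖ = ‖l • B x‖ := by
        rw [← Nat.cast_smul_eq_nsmul ℝ, norm_smul, Real.norm_natCast]
    _ ≤ ‖π (γ^[l] x) - π x‖ + ‖l • B x - (π (γ^[l] x) - π x)‖ :=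
      norm_le_norm_add_norm_sub' _ _
    _ ≤ ‖π (γ^[l] x) - π x‖ + l * ε := by
      gcongr; exact norm_nsmul_sub_iterate_displacement_le hγ hosc x l

end AlmostTranslation

/-- For almost translations `γ, η` of `ℝ^n = ⊕ℝ^{n_i}`: (i) the translation bounds are
subadditive under composition, `B^max_{i,γη} ≤ B^max_{i,γ} + B^max_{i,η}`; and (ii)
`l·B^max_{i,γ} ≤ B^max_{i,γ^l} + l·ε_{i,γ}` where `ε_{i,γ}` bounds the oscillation of
`B_{i,γ}`. -/
theorem stmt_17 (r : ℕ) (n : Fin (r + 1) → ℕ)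
    (Bγ Bη : ∀ i : Fin (r + 1),
      (∀ j, EuclideanSpace ℝ (Fin (n j))) → EuclideanSpace ℝ (Fin (n i)))
    (γ η : (∀ i, EuclideanSpace ℝ (Fin (n i))) → ∀ i, EuclideanSpace ℝ (Fin (n i)))
    (hγ : ∀ x i, γ x i = x i + Bγ i x)
    (hη : ∀ x i, η x i = x i + Bη i x)
    (ε : Fin (r + 1) → ℝ)
    (hosc : ∀ i x x', ‖Bγ i x - Bγ i x'‖ ≤ ε i) :
    (∀ (i : Fin (r + 1)) (Mγ Mη : ℝ), (∀ x, ‖Bγ i x‖ ≤ Mγ) → (∀ x, ‖Bη i x‖ ≤ Mη) →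
      ∀ x, ‖γ (η x) i - x i‖ ≤ Mγ + Mη) ∧
    (∀ (l : ℕ) (i : Fin (r + 1)) (x : ∀ j, EuclideanSpace ℝ (Fin (n j))),
      (l : ℝ) * ‖Bγ i x‖ ≤ ‖(γ^[l] x) i - x i‖ + l * ε i) :=
  ⟨fun i _ _ hMγ hMη ↦
      norm_comp_displacement_le (π := fun x : ∀ j, EuclideanSpace ℝ (Fin (n j)) ↦ x i)
        (fun x ↦ hγ x i) (fun x ↦ hη x i) hMγ hMη,
    fun l i x ↦ mul_norm_le_norm_iterate_displacement_add
      (π := fun x : ∀ j, EuclideanSpace ℝ (Fin (n j)) ↦ x i)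
      (fun x ↦ hγ x i) (hosc i) x l⟩
end
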